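/- arXiv:0912.2780 — 5 statements merged into one kernel-verified Lean document; each statement's English description precedes it below -/
import Mathlib

section
/- Let n ≥ 1 and let K ⊆ ℝⁿ be a convex body (a closed convex set with nonempty interior). Then the closure of the normal cone of K equals the polar cone of the recession cone of K; that is, closure{u ∈ ℝⁿ : there exists x ∈ K with ⟨y,u⟩ ≤ ⟨x,u⟩ for all y ∈ K} = {w ∈ ℝⁿ : ⟨w,v⟩ ≤ 0 for all v ∈ rec(K)}. -/
open scoped RealInnerProductSpace

/-- The recession cone of a set `A ⊆ ℝⁿ`. -/
def recCone {n : ℕ} (A : Set (EuclideanSpace ℝ (Fin n))) : Set (EuclideanSpace ℝ (Fin n)) :=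
  {v | ∀ x ∈ A, ∀ t : ℝ, 0 ≤ t → x + t • v ∈ A}

/-! The normal cone `N` of `K` lies in the barrier cone `B = {u | sup_{y ∈ K} ⟪y, u⟫ < ∞}`,
and both have closure `(rec K)°`.

If `v ∈ B°`, then `v ∈ rec K`: let `p` be the projection of `z = x + t • v` onto `K`; the
residual `r = z - p` is normal at `p`, so `⟪r, v⟫ ≤ 0`, and then
`‖r‖² = ⟪r, x - p⟫ + t ⟪r, v⟫ ≤ 0`. Hence `(rec K)° ⊆ B°° = closure B` by the bipolar theorem.

Conversely `B ⊆ closure N`: for `u ∈ B` let `p_R` be the projection of `R • u` onto `K`. Then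
`u - p_R / R` is normal at `p_R`, and the projection inequality tested at a fixed `x₀ ∈ K` gives
`‖p_R‖² = O(R)`, so `u - p_R / R → u`. -/

open Filter Topology

section ConvexGeometry

variable {E : Type*} [NormedAddCommGroup E] [InnerProductSpace ℝ E]

def normalCone (K : Set E) : Set E :=
  {u | ∃ x ∈ K, ∀ y ∈ K, ⟪y, u⟫ ≤ ⟪x, u⟫}

def polarCone (C : Set E) : Set E :=
  {w | ∀ v ∈ C, ⟪w, v⟫ ≤ 0}

def barrierCone (K : Set E) : PointedCone ℝ E where
  carrier := {u | ∃ M : ℝ, ∀ y ∈ K, ⟪y, u⟫ ≤ M}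
  zero_mem' := ⟨0, fun y _ => by simp⟩
  add_mem' := by
    rintro u v ⟨M, hM⟩ ⟨M', hM'⟩
    exact ⟨M + M', fun y hy => by rw [inner_add_right]; exact add_le_add (hM y hy) (hM' y hy)⟩
  smul_mem' := by
    rintro ⟨t, ht⟩ u ⟨M, hM⟩
    refine ⟨t * M, fun y hy => ?_⟩
    rw [Nonneg.mk_smul, real_inner_smul_right]
    exact mul_le_mul_of_nonneg_left (hM y hy) ht

theorem isClosed_polarCone (C : Set E) : IsClosed (polarCone C) := by
  simp only [polarCone, Set.ofPred_forall]
  exact isClosed_biInter fun v _ => isClosed_le (continuous_id.inner continuous_const)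
    continuous_const

theorem polarCone_anti {C D : Set E} (h : C ⊆ D) : polarCone D ⊆ polarCone C :=
  fun _ hw v hv => hw v (h hv)

theorem polarCone_polarCone_subset_closure [CompleteSpace E] (C : PointedCone ℝ E) :
    polarCone (polarCone C) ⊆ closure (C : Set E) := by
  intro w hw
  by_contra hwC
  obtain ⟨y, hy, hwy⟩ := ProperCone.hyperplane_separation' (C := Submodule.closure C) (x₀ := w)
    (by simpa [← SetLike.mem_coe] using hwC)
  have hneg : -y ∈ polarCone C := fun v hv => by
    rw [real_inner_comm, inner_neg_right, neg_nonpos]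
    exact hy v (by simpa [← SetLike.mem_coe] using subset_closure hv)
  have := hw (-y) hneg
  rw [inner_neg_right] at this
  linarith

theorem smul_mem_normalCone {K : Set E} {u : E} (hu : u ∈ normalCone K) {t : ℝ} (ht : 0 ≤ t) :
    t • u ∈ normalCone K := by
  obtain ⟨x, hx, hmax⟩ := hu
  refine ⟨x, hx, fun y hy => ?_⟩
  simp only [real_inner_smul_right]
  exact mul_le_mul_of_nonneg_left (hmax y hy) ht

theorem normalCone_subset_barrierCone (K : Set E) : normalCone K ⊆ barrierCone K :=
  fun _ ⟨_, _, hmax⟩ => ⟨_, hmax⟩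

theorem sub_mem_normalCone {K : Set E} {z p : E} (hp : p ∈ K)
    (hproj : ∀ y ∈ K, ⟪z - p, y - p⟫ ≤ 0) : z - p ∈ normalCone K := by
  refine ⟨p, hp, fun y hy => ?_⟩
  have := hproj y hy
  rw [inner_sub_right, real_inner_comm y, real_inner_comm p] at this
  linarith

theorem exists_mem_forall_inner_sub_nonpos [CompleteSpace E] {K : Set E} (hne : K.Nonempty)
    (hcl : IsClosed K) (hconv : Convex ℝ K) (z : E) :
    ∃ p ∈ K, ∀ y ∈ K, ⟪z - p, y - p⟫ ≤ 0 := by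
  obtain ⟨p, hp, hmin⟩ := exists_norm_eq_iInf_of_complete_convex hne hcl.isComplete hconv z
  exact ⟨p, hp, (norm_eq_iInf_iff_real_inner_le_zero hconv hp).1 hmin⟩

theorem norm_sq_le_of_inner_sub_nonpos {u p x₀ : E} {R M : ℝ} (hR : 0 ≤ R) (hp : ⟪p, u⟫ ≤ M)
    (hproj : ⟪R • u - p, x₀ - p⟫ ≤ 0) : ‖p‖ ^ 2 ≤ 2 * R * (M - ⟪x₀, u⟫) + ‖x₀‖ ^ 2 := by
  have hpx : 2 * ⟪p, x₀⟫ ≤ ‖p‖ ^ 2 + ‖x₀‖ ^ 2 := by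
    nlinarith [norm_sub_sq_real p x₀, sq_nonneg ‖p - x₀‖]
  simp only [inner_sub_left, inner_sub_right, real_inner_smul_left, real_inner_self_eq_norm_sq]
    at hproj
  rw [real_inner_comm x₀ u, real_inner_comm p u] at hproj
  linarith [mul_le_mul_of_nonneg_left hp hR]

theorem barrierCone_subset_closure_normalCone [CompleteSpace E] {K : Set E} (hne : K.Nonempty)
    (hcl : IsClosed K) (hconv : Convex ℝ K) :
    (barrierCone K : Set E) ⊆ closure (normalCone K) := by
  rintro u ⟨M, hM⟩
  obtain ⟨x₀, hx₀⟩ := hne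
  choose p hpK hproj using fun R : ℝ =>
    exists_mem_forall_inner_sub_nonpos ⟨x₀, hx₀⟩ hcl hconv (R • u)
  have hnormal : ∀ᶠ R in atTop, u - R⁻¹ • p R ∈ normalCone K := by
    filter_upwards [eventually_gt_atTop 0] with R hR
    have := smul_mem_normalCone (sub_mem_normalCone (hpK R) (hproj R)) (inv_nonneg.2 hR.le)
    rwa [smul_sub, inv_smul_smul₀ hR.ne'] at this
  have hsq : Tendsto (fun R : ℝ => ‖R⁻¹ • p R‖ ^ 2) atTop (𝓝 0) := by
    have hlim : Tendsto (fun R : ℝ => 2 * (M - ⟪x₀, u⟫) * R⁻¹ + ‖x₀‖ ^ 2 * R⁻¹ ^ 2)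
        atTop (𝓝 0) := by
      simpa using (tendsto_inv_atTop_zero.const_mul (2 * (M - ⟪x₀, u⟫))).add
        ((tendsto_inv_atTop_zero.pow 2).const_mul (‖x₀‖ ^ 2))
    refine squeeze_zero' (Eventually.of_forall fun _ => by positivity) ?_ hlim
    filter_upwards [eventually_gt_atTop 0] with R hR
    have hbound := norm_sq_le_of_inner_sub_nonpos hR.le (hM _ (hpK R)) (hproj R x₀ hx₀)
    rw [norm_smul, mul_pow, Real.norm_eq_abs, abs_of_pos (inv_pos.2 hR)]
    calc R⁻¹ ^ 2 * ‖p R‖ ^ 2 ≤ R⁻¹ ^ 2 * (2 * R * (M - ⟪x₀, u⟫) + ‖x₀‖ ^ 2) := by gcongr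
      _ = _ := by field_simp
  have hsmall : Tendsto (fun R : ℝ => R⁻¹ • p R) atTop (𝓝 0) := by
    rw [tendsto_zero_iff_norm_tendsto_zero]
    simpa [Real.sqrt_sq (norm_nonneg _)] using hsq.sqrt
  exact mem_closure_of_tendsto (by simpa using tendsto_const_nhds.sub hsmall) hnormal

end ConvexGeometry

theorem normalCone_subset_polarCone_recCone {n : ℕ} (K : Set (EuclideanSpace ℝ (Fin n))) :
    normalCone K ⊆ polarCone (recCone K) := by
  rintro u ⟨x, hx, hmax⟩ v hv
  have := hmax _ (by simpa using hv x hx 1 zero_le_one)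
  rw [inner_add_left] at this
  linarith [real_inner_comm u v]

theorem polarCone_barrierCone_subset_recCone {n : ℕ} {K : Set (EuclideanSpace ℝ (Fin n))}
    (hcl : IsClosed K) (hconv : Convex ℝ K) : polarCone (barrierCone K) ⊆ recCone K := by
  intro v hv x hx t ht
  obtain ⟨p, hp, hproj⟩ := exists_mem_forall_inner_sub_nonpos ⟨x, hx⟩ hcl hconv (x + t • v)
  have hvq : ⟪x + t • v - p, v⟫ ≤ 0 := by
    rw [real_inner_comm]
    exact hv _ (normalCone_subset_barrierCone K (sub_mem_normalCone hp hproj))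
  have hsq : ‖x + t • v - p‖ ^ 2 ≤ 0 := calc
    ‖x + t • v - p‖ ^ 2 = ⟪x + t • v - p, (x - p) + t • v⟫ := by
      rw [← real_inner_self_eq_norm_sq]; congr 1; abel
    _ = ⟪x + t • v - p, x - p⟫ + t * ⟪x + t • v - p, v⟫ := by
      rw [inner_add_right, real_inner_smul_right]
    _ ≤ 0 := add_nonpos (hproj x hx) (mul_nonpos_of_nonneg_of_nonpos ht hvq)
  have hzero : x + t • v - p = 0 :=
    norm_eq_zero.1 ((pow_eq_zero_iff two_ne_zero).1 (le_antisymm hsq (sq_nonneg _)))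
  rwa [sub_eq_zero.1 hzero]

theorem closure_normalCone_eq_polar_recCone_general (n : ℕ)
    (K : Set (EuclideanSpace ℝ (Fin n)))
    (hKcl : IsClosed K) (hKconv : Convex ℝ K) (hKint : (interior K).Nonempty) :
    closure {u : EuclideanSpace ℝ (Fin n) | ∃ x ∈ K, ∀ y ∈ K, ⟪y, u⟫ ≤ ⟪x, u⟫} =
      {w : EuclideanSpace ℝ (Fin n) | ∀ v ∈ recCone K, ⟪w, v⟫ ≤ 0} := by
  change closure (normalCone K) = polarCone (recCone K)
  refine subset_antisymm
    (closure_minimal (normalCone_subset_polarCone_recCone K) (isClosed_polarCone _)) ?_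
  calc polarCone (recCone K)
      ⊆ polarCone (polarCone (barrierCone K)) :=
        polarCone_anti (polarCone_barrierCone_subset_recCone hKcl hKconv)
    _ ⊆ closure (barrierCone K) := polarCone_polarCone_subset_closure _
    _ ⊆ closure (normalCone K) := closure_minimal
        (barrierCone_subset_closure_normalCone (hKint.mono interior_subset) hKcl hKconv)
        isClosed_closure

/-- For a convex body `K ⊆ ℝⁿ`, the closure of the normal cone of `K` equals the polar cone
of the recession cone of `K`. -/
theorem closure_normalCone_eq_polar_recCone (n : ℕ) (hn : 1 ≤ n)
    (K : Set (EuclideanSpace ℝ (Fin n)))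
    (hKcl : IsClosed K) (hKconv : Convex ℝ K) (hKint : (interior K).Nonempty) :
    closure {u : EuclideanSpace ℝ (Fin n) | ∃ x ∈ K, ∀ y ∈ K, ⟪y, u⟫ ≤ ⟪x, u⟫} =
      {w : EuclideanSpace ℝ (Fin n) | ∀ v ∈ recCone K, ⟪w, v⟫ ≤ 0} :=
  closure_normalCone_eq_polar_recCone_general n K hKcl hKconv hKint
end

section
/- Let C ⊆ ℝⁿ be a nonempty closed convex cone (so t·x ∈ C for all x ∈ C and t ≥ 0) which is relatively proper, i.e., C ≠ span_ℝ(C) as sets. Let m := dim span_ℝ(C). Then the Bochner integral ∫_{C ∩ S^{n-1}} x dμH^{m-1}(x) of the identity map over C ∩ S^{n-1} with respect to (m−1)-dimensional Hausdorff measure is a nonzero vector of ℝⁿ. -/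
open scoped RealInnerProductSpace ENNReal Pointwise
open MeasureTheory Metric Set Bornology Module

/-!
Separate a point of `span C \ C` from `C` by a functional `⟪·, u⟫` that is nonnegative on `C`.
Inside `V = span C` the cone has nonempty interior, on which `⟪·, u⟫` is positive. Hence
`⟪∫ x, u⟫ = ∫ ⟪x, u⟫ > 0`: the integrand is nonnegative and positive on an open cap of the unit
sphere of `V`, which has positive `(m-1)`-dimensional Hausdorff measure, while the whole sphere has
finite measure.
-/

theorem lipschitzOnWith_inv_norm_smul {E : Type*} [NormedAddCommGroup E] [NormedSpace ℝ E] :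
    LipschitzOnWith 2 (fun x : E => ‖x‖⁻¹ • x) {x | 1 ≤ ‖x‖} := by
  refine LipschitzOnWith.of_dist_le_mul fun x (hx : 1 ≤ ‖x‖) y (hy : 1 ≤ ‖y‖) => ?_
  have hx0 : ‖x‖ ≠ 0 := by positivity
  have hy0 : ‖y‖ ≠ 0 := by positivity
  have hsplit : ‖x‖⁻¹ • x - ‖y‖⁻¹ • y = ‖x‖⁻¹ • ((x - y) + (‖y‖ - ‖x‖) • (‖y‖⁻¹ • y)) := by
    have : ‖x‖⁻¹ * (‖y‖ - ‖x‖) * ‖y‖⁻¹ = ‖x‖⁻¹ - ‖y‖⁻¹ := by field_simp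
    rw [smul_add, smul_smul, smul_smul, this, smul_sub, sub_smul]
    abel
  have hnorm : |‖y‖ - ‖x‖| ≤ ‖x - y‖ := by
    rw [abs_sub_comm]; exact abs_norm_sub_norm_le x y
  rw [dist_eq_norm, dist_eq_norm, hsplit, norm_smul, norm_inv, norm_norm]
  calc ‖x‖⁻¹ * ‖x - y + (‖y‖ - ‖x‖) • (‖y‖⁻¹ • y)‖
      ≤ 1 * (‖x - y‖ + |‖y‖ - ‖x‖|) := by
        gcongr
        · exact inv_le_one_of_one_le₀ hx
        · refine (norm_add_le _ _).trans_eq ?_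
          rw [norm_smul, norm_smul, norm_inv, norm_norm, inv_mul_cancel₀ hy0, Real.norm_eq_abs,
            mul_one]
    _ ≤ (2 : NNReal) * ‖x - y‖ := by push_cast; linarith

theorem ProperCone.exists_coe_eq {E : Type*} [AddCommGroup E] [Module ℝ E] [TopologicalSpace E]
    {C : Set E} (hne : C.Nonempty) (hcl : IsClosed C) (hconv : Convex ℝ C)
    (hcone : ∀ x ∈ C, ∀ t : ℝ, 0 ≤ t → t • x ∈ C) : ∃ K : ProperCone ℝ E, (K : Set E) = C := by
  obtain ⟨x, hx⟩ := hne
  have hadd : ∀ {y z : E}, y ∈ C → z ∈ C → y + z ∈ C := fun {y z} hy hz => by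
    convert hcone _ (hconv hy hz (by norm_num : (0 : ℝ) ≤ 1 / 2) (by norm_num : (0 : ℝ) ≤ 1 / 2)
      (by norm_num)) 2 (by norm_num) using 1
    module
  exact ⟨{ carrier := C
           add_mem' := hadd
           zero_mem' := by simpa using hcone x hx 0 le_rfl
           smul_mem' := fun c y hy => hcone y hy c c.2
           isClosed' := hcl }, rfl⟩

theorem Isometry.setIntegral_image_hausdorffMeasure {X Y G : Type*} [MetricSpace X]
    [CompleteSpace X] [MeasurableSpace X] [BorelSpace X] [MetricSpace Y] [MeasurableSpace Y]
    [BorelSpace Y] [NormedAddCommGroup G] [NormedSpace ℝ G] {f : X → Y} (hf : Isometry f) {d : ℝ}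
    (hd : 0 ≤ d) (g : Y → G) (s : Set X) :
    ∫ y in f '' s, g y ∂μH[d] = ∫ x in s, g (f x) ∂μH[d] := by
  rw [← Measure.restrict_restrict_of_subset (image_subset_range f s),
    ← hf.map_hausdorffMeasure (Or.inl hd), hf.isClosedEmbedding.measurableEmbedding.setIntegral_map,
    preimage_image_eq _ hf.injective]

section InnerProductSpace

variable {F : Type*} [NormedAddCommGroup F] [InnerProductSpace ℝ F]

theorem inner_pos_of_mem_interior {K : Set F} {u y : F} (hK : ∀ x ∈ K, 0 ≤ ⟪x, u⟫) (hu : u ≠ 0)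
    (hy : y ∈ interior K) : 0 < ⟪y, u⟫ := by
  have hmem : ∀ᶠ t : ℝ in nhds 0, y - t • u ∈ K :=
    (Continuous.tendsto' (by fun_prop) 0 y (by simp)).eventually (mem_interior_iff_mem_nhds.mp hy)
  obtain ⟨t, hyt, ht⟩ := ((hmem.filter_mono nhdsWithin_le_nhds).and self_mem_nhdsWithin).exists
    (f := nhdsWithin 0 (Ioi 0))
  have := hK _ hyt
  rw [inner_sub_left, real_inner_smul_left, real_inner_self_eq_norm_sq] at this
  have : 0 < t * ‖u‖ ^ 2 := mul_pos ht (by positivity)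
  linarith

theorem norm_add_sqrt_smul_of_inner_eq_zero {z w : F} (hz : ‖z‖ = 1) (hwz : ⟪w, z⟫ = 0)
    (hw : ‖w‖ ≤ 1) :
    ‖w + √(1 - ‖w‖ ^ 2) • z‖ = 1 ∧ ‖w + √(1 - ‖w‖ ^ 2) • z - z‖ ^ 2 ≤ 2 * ‖w‖ ^ 2 := by
  set t := √(1 - ‖w‖ ^ 2)
  have ht0 : 0 ≤ t := Real.sqrt_nonneg _
  have ht2 : t ^ 2 = 1 - ‖w‖ ^ 2 := Real.sq_sqrt (by nlinarith [norm_nonneg w])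
  have hpyth (s : ℝ) : ‖w + s • z‖ ^ 2 = ‖w‖ ^ 2 + s ^ 2 := by
    rw [norm_add_sq_real, inner_smul_right, hwz, norm_smul, hz, Real.norm_eq_abs, mul_one, sq_abs]
    ring
  constructor
  · rw [← pow_eq_one_iff_of_nonneg (norm_nonneg _) two_ne_zero, hpyth, ht2]; ring
  · have : w + t • z - z = w + (t - 1) • z := by rw [sub_smul, one_smul, add_sub_assoc]
    rw [this, hpyth]
    nlinarith [norm_nonneg w]

variable [FiniteDimensional ℝ F]

theorem natCast_finrank_orthogonal_span_singleton {z : F} (hz : z ≠ 0) :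
    (finrank ℝ (ℝ ∙ z)ᗮ : ℝ) = finrank ℝ F - 1 := by
  have h := (ℝ ∙ z).finrank_add_finrank_orthogonal
  rw [finrank_span_singleton hz] at h
  rw [← h]; push_cast; ring

theorem ProperCone.interior_nonempty_of_span_eq_top (K : ProperCone ℝ F)
    (h : Submodule.span ℝ (K : Set F) = ⊤) : (interior (K : Set F)).Nonempty := by
  rw [K.convex.interior_nonempty_iff_affineSpan_eq_top]
  have := affineSpan_insert_zero (k := ℝ) (K : Set F)
  rw [insert_eq_of_mem (show (0 : F) ∈ (K : Set F) from K.zero_mem), h, Submodule.top_coe] at this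
  exact SetLike.coe_injective this

variable [MeasurableSpace F] [BorelSpace F]

theorem AffineSubspace.hausdorffMeasure_lt_top_of_isBounded (A : AffineSubspace ℝ F) {s : Set F}
    (hsA : s ⊆ A) (hs : IsBounded s) : μH[finrank ℝ A.direction] s < ∞ := by
  obtain rfl | ⟨c, hc⟩ := s.eq_empty_or_nonempty
  · simp
  set W := A.direction
  have hW : Isometry W.subtype := W.subtypeₗᵢ.isometry
  have hsW : (IsometryEquiv.subRight c) '' s ⊆ range W.subtype := by
    rintro _ ⟨x, hx, rfl⟩
    exact ⟨⟨_, A.vsub_mem_direction (hsA hx) (hsA hc)⟩, rfl⟩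
  rw [← (IsometryEquiv.subRight c).hausdorffMeasure_image, ← image_preimage_eq_of_subset hsW,
    hW.hausdorffMeasure_image (Or.inl (Nat.cast_nonneg _))]
  exact (hW.antilipschitz.isBounded_preimage
    ((IsometryEquiv.subRight c).isometry.lipschitz.isBounded_image hs)).measure_lt_top

theorem hausdorffMeasure_sphere_lt_top : μH[finrank ℝ F - 1] (sphere (0 : F) 1) < ∞ := by
  refine (isCompact_sphere 0 1).measure_lt_top_of_nhdsWithin fun z hz => ?_
  have hz1 : ‖z‖ = 1 := by simpa using hz
  have hz0 : z ≠ 0 := norm_ne_zero_iff.mp (by simp [hz1])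
  set W := (ℝ ∙ z)ᗮ
  -- radially projecting a disc of the tangent hyperplane at `z` covers a neighbourhood of `z`
  set T : Set F := {p | ⟪p, z⟫ = 1 ∧ ‖p‖ ≤ 2}
  have hT_one_le : T ⊆ {p | 1 ≤ ‖p‖} := fun p hp => by
    simpa [hp.1, hz1] using real_inner_le_norm p z
  have hT_tangent : T ⊆ AffineSubspace.mk' z W := fun p hp => by
    rw [SetLike.mem_coe, AffineSubspace.mem_mk', vsub_eq_sub,
      Submodule.mem_orthogonal_singleton_iff_inner_right, inner_sub_right, real_inner_comm, hp.1,
      real_inner_self_eq_norm_sq, hz1]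
    norm_num
  have hcover : sphere 0 1 ∩ {x | 1 / 2 < ⟪x, z⟫} ⊆ (fun p => ‖p‖⁻¹ • p) '' T := by
    rintro x ⟨hx, hxz : 1 / 2 < ⟪x, z⟫⟩
    have hx1 : ‖x‖ = 1 := by simpa using hx
    have hpos : 0 < ⟪x, z⟫ := by linarith
    have hnorm : ‖⟪x, z⟫⁻¹ • x‖ = ⟪x, z⟫⁻¹ := by
      rw [norm_smul, hx1, mul_one, Real.norm_of_nonneg (inv_nonneg.mpr hpos.le)]
    refine ⟨⟪x, z⟫⁻¹ • x, ⟨?_, ?_⟩, ?_⟩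
    · rw [real_inner_smul_left, inv_mul_cancel₀ hpos.ne']
    · rw [hnorm, inv_le_comm₀ hpos two_pos]; linarith
    · simp only [hnorm, inv_inv, smul_smul, mul_inv_cancel₀ hpos.ne', one_smul]
  have hnhds : sphere 0 1 ∩ {x | 1 / 2 < ⟪x, z⟫} ∈ nhdsWithin z (sphere 0 1) :=
    inter_mem_nhdsWithin _ ((isOpen_lt continuous_const (by fun_prop)).mem_nhds
      (by norm_num [real_inner_self_eq_norm_sq, hz1]))
  have hT : μH[finrank ℝ W] T < ∞ := by
    have := (AffineSubspace.mk' z W).hausdorffMeasure_lt_top_of_isBounded hT_tangent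
      ((isBounded_closedBall (x := (0 : F)) (r := 2)).subset fun p hp => by simpa using hp.2)
    rwa [AffineSubspace.direction_mk'] at this
  refine ⟨_, hnhds, (measure_mono hcover).trans_lt ?_⟩
  rw [← natCast_finrank_orthogonal_span_singleton hz0]
  exact ((lipschitzOnWith_inv_norm_smul.mono hT_one_le).hausdorffMeasure_image_le
    (Nat.cast_nonneg _)).trans_lt (ENNReal.mul_lt_top (by simp) hT)

theorem hausdorffMeasure_sphere_inter_ball_pos {z : F} (hz : ‖z‖ = 1) {r : ℝ} (hr : 0 < r) :
    0 < μH[finrank ℝ F - 1] (sphere (0 : F) 1 ∩ ball z r) := by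
  have hz0 : z ≠ 0 := norm_ne_zero_iff.mp (by simp [hz])
  set W := (ℝ ∙ z)ᗮ
  set ρ := min (r / 2) 1
  have hsub : ball (0 : W) ρ ⊆ W.orthogonalProjectionOnto '' (sphere 0 1 ∩ ball z r) := by
    intro w hw
    have hwρ : ‖w‖ < ρ := by simpa using hw
    have hwz : ⟪(w : F), z⟫ = 0 :=
      real_inner_comm z w ▸ Submodule.mem_orthogonal_singleton_iff_inner_right.mp w.2
    obtain ⟨hnorm, hdist⟩ :=
      norm_add_sqrt_smul_of_inner_eq_zero hz hwz (by simpa using hwρ.le.trans (min_le_right _ _))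
    refine ⟨_, ⟨by simpa using hnorm, ?_⟩, ?_⟩
    · rw [mem_ball, dist_eq_norm, ← sq_lt_sq₀ (norm_nonneg _) hr.le]
      have : ‖(w : F)‖ < r / 2 := by simpa using hwρ.trans_le (min_le_left _ _)
      nlinarith [norm_nonneg (w : F)]
    · rw [map_add, map_smul, Submodule.orthogonalProjectionOnto_mem_subspace_eq_self,
        Submodule.orthogonalProjectionOnto_orthogonalComplement_singleton_eq_zero, smul_zero,
        add_zero]
  rw [← natCast_finrank_orthogonal_span_singleton hz0]
  calc 0 < μH[finrank ℝ W] (ball (0 : W) ρ) := measure_ball_pos _ _ (by positivity)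
    _ ≤ μH[finrank ℝ W] (W.orthogonalProjectionOnto '' (sphere 0 1 ∩ ball z r)) :=
      measure_mono hsub
    _ ≤ μH[finrank ℝ W] (sphere 0 1 ∩ ball z r) :=
      hausdorffMeasure_orthogonalProjectionOnto_le _ _ _ (Nat.cast_nonneg _)

theorem inner_setIntegral_pos {μ : Measure F} {s : Set F} {u : F} (hs : MeasurableSet s)
    (hμs : μ s ≠ ∞) (hbdd : IsBounded s) (hnonneg : ∀ x ∈ s, 0 ≤ ⟪x, u⟫)
    (hpos : 0 < μ {x ∈ s | 0 < ⟪x, u⟫}) : 0 < ⟪∫ x in s, x ∂μ, u⟫ := by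
  obtain ⟨M, hM⟩ := hbdd.exists_norm_le
  have hint : IntegrableOn (fun x => x) s μ := Measure.integrableOn_of_bounded hμs
    aestronglyMeasurable_id ((ae_restrict_mem hs).mono hM)
  rw [real_inner_comm, ← integral_inner hint, setIntegral_pos_iff_support_of_nonneg_ae
    ((ae_restrict_mem hs).mono fun x hx => (real_inner_comm x u ▸ hnonneg x hx))
    (hint.const_inner u)]
  refine hpos.trans_le (measure_mono fun x hx => ⟨?_, hx.1⟩)
  exact (real_inner_comm x u ▸ hx.2).ne'

theorem ProperCone.setIntegral_inter_sphere_ne_zero (K : ProperCone ℝ F)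
    (hK : (interior (K : Set F)).Nonempty) (hKtop : K ≠ ⊤) :
    ∫ x in (K : Set F) ∩ sphere 0 1, x ∂μH[finrank ℝ F - 1] ≠ 0 := by
  obtain ⟨z, hz⟩ : ∃ z, z ∉ K := by
    by_contra! h
    exact hKtop (eq_top_iff.mpr fun x _ => h x)
  obtain ⟨u, hKu, hzu⟩ := K.hyperplane_separation' hz
  have hu : u ≠ 0 := by rintro rfl; simp at hzu
  obtain ⟨y, hy⟩ := hK
  have hy0 : y ≠ 0 := by
    rintro rfl
    simpa using inner_pos_of_mem_interior hKu hu hy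
  have hy' : ‖y‖⁻¹ • y ∈ interior (K : Set F) := by
    have : ‖y‖⁻¹ • interior (K : Set F) ⊆ interior K := by
      rw [← interior_smul₀ (inv_ne_zero (norm_ne_zero_iff.mpr hy0))]
      exact interior_mono (smul_set_subset_iff.mpr fun x hx => K.smul_mem hx (by positivity))
    exact this (smul_mem_smul_set hy)
  have hopen : IsOpen (interior (K : Set F) ∩ {x | 0 < ⟪x, u⟫}) :=
    isOpen_interior.inter (isOpen_lt continuous_const (by fun_prop))
  obtain ⟨r, hr, hball⟩ := Metric.isOpen_iff.mp hopen _
    ⟨hy', inner_pos_of_mem_interior hKu hu hy'⟩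
  have hcap : sphere 0 1 ∩ ball (‖y‖⁻¹ • y) r ⊆ {x ∈ (K : Set F) ∩ sphere 0 1 | 0 < ⟪x, u⟫} :=
    fun x hx => ⟨⟨interior_subset (hball hx.2).1, hx.1⟩, (hball hx.2).2⟩
  have hpos := inner_setIntegral_pos (K.isClosed.inter isClosed_sphere).measurableSet
    (measure_mono inter_subset_right |>.trans_lt hausdorffMeasure_sphere_lt_top).ne
    (isBounded_sphere.subset inter_subset_right) (fun x hx => hKu x hx.1)
    ((hausdorffMeasure_sphere_inter_ball_pos (norm_smul_inv_norm hy0) hr).trans_le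
      (measure_mono hcap))
  intro h
  rw [h, inner_zero_left] at hpos
  exact hpos.false

end InnerProductSpace

/-- For a nonempty closed convex cone `C ⊆ ℝⁿ` which is relatively proper (a proper subset of
its linear span), the Bochner integral of the identity over `C ∩ S^{n-1}` with respect to the
`(m-1)`-dimensional Hausdorff measure, where `m = dim span C`, is a nonzero vector. -/
theorem integral_over_cone_sphere_ne_zero (n : ℕ) (C : Set (EuclideanSpace ℝ (Fin n)))
    (hne : C.Nonempty) (hcl : IsClosed C) (hconv : Convex ℝ C)
    (hcone : ∀ x ∈ C, ∀ t : ℝ, 0 ≤ t → t • x ∈ C)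
    (hproper : C ≠ (Submodule.span ℝ C : Set (EuclideanSpace ℝ (Fin n)))) :
    (∫ x in C ∩ Metric.sphere (0 : EuclideanSpace ℝ (Fin n)) 1, x
      ∂(μH[(Module.finrank ℝ (Submodule.span ℝ C) : ℝ) - 1])) ≠ 0 := by
  obtain ⟨K, rfl⟩ := ProperCone.exists_coe_eq hne hcl hconv hcone
  set V := Submodule.span ℝ (K : Set (EuclideanSpace ℝ (Fin n)))
  set K' := K.comap V.subtypeL
  obtain ⟨z, hzK⟩ : ∃ z : V, z ∉ K' := by
    by_contra! h
    exact hproper (Submodule.subset_span.antisymm fun x hx => h ⟨x, hx⟩)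
  have hV : (0 : ℝ) ≤ finrank ℝ V - 1 := by
    have hz0 : z ≠ 0 := by rintro rfl; exact hzK K'.zero_mem
    have : 1 ≤ finrank ℝ V := finrank_pos_iff_exists_ne_zero.mpr ⟨z, hz0⟩
    rw [sub_nonneg]; exact_mod_cast this
  have himage : (K : Set _) ∩ sphere 0 1 = V.subtypeₗᵢ '' ((K' : Set V) ∩ sphere 0 1) := by
    ext x
    refine ⟨fun hx => ⟨⟨x, Submodule.subset_span hx.1⟩, ⟨hx.1, by simpa using hx.2⟩, rfl⟩, ?_⟩
    rintro ⟨x, hx, rfl⟩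
    exact ⟨hx.1, by simpa using hx.2⟩
  rw [himage, V.subtypeₗᵢ.isometry.setIntegral_image_hausdorffMeasure hV,
    V.subtypeₗᵢ.integral_comp_comm, map_ne_zero_iff _ V.subtypeₗᵢ.injective]
  exact K'.setIntegral_inter_sphere_ne_zero
    (K'.interior_nonempty_of_span_eq_top Submodule.span_span_coe_preimage)
    (fun h => hzK (by simp [h]))
end

section
/- Let u ∈ ℝⁿ be a unit vector, and let K₀, K₁ ⊆ ℝⁿ be nonempty closed convex sets, each contained in the half-space {x : ⟨x,u⟩ ≥ 0}, such that for every t ∈ ℝ the slices K₀ ∩ {x : ⟨x,u⟩ ≤ t} and K₁ ∩ {x : ⟨x,u⟩ ≤ t} are compact. Then the recession cone of the Minkowski sum equals the Minkowski sum of the recession cones: rec(K₀ + K₁) = rec(K₀) + rec(K₁). -/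
/-!
Write the points `p + (k + 1) • v` of a ray in `K₀ + K₁` as `a k + b k` with `a k ∈ K₀`,
`b k ∈ K₁`. As `K₁` lies in the half-space, `⟪a k, u⟫` grows at most linearly in `k`; by convexity
and boundedness of one slice of `K₀`, so does `‖a k‖`. A limit point `w` of `(k + 1)⁻¹ • a k` is
then an asymptotic direction of `K₀`, and `v - w` one of `K₁`; for closed convex sets asymptotic
directions are recession directions.
-/

open scoped RealInnerProductSpace Pointwise
open Filter Topology Metric

section AsymptoticCone

variable {V : Type*} [AddCommGroup V] [Module ℝ V] [TopologicalSpace V]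
  [IsTopologicalAddGroup V] [ContinuousSMul ℝ V]
  {ι : Type*} {l : Filter ι} [l.NeBot] {t : ι → ℝ}

theorem mem_asymptoticCone_of_tendsto {K : Set V} {a : ι → V} (ha : ∀ i, a i ∈ K)
    (ht : Tendsto t l atTop) {v : V} (hv : Tendsto (fun i => (t i)⁻¹ • a i) l (𝓝 v)) :
    v ∈ asymptoticCone ℝ K := by
  have hmem : ∀ᶠ i in l, t i • (t i)⁻¹ • a i ∈ K := by
    filter_upwards [ht.eventually_ne_atTop 0] with i hi
    rw [smul_inv_smul₀ hi]
    exact ha i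
  exact (ht.atTop_smul_nhds_tendsto_asymptoticNhds hv).frequently hmem.frequently

theorem mem_asymptoticCone_add_asymptoticCone_of_tendsto {K₀ K₁ : Set V} {a b : ι → V}
    (ha : ∀ i, a i ∈ K₀) (hb : ∀ i, b i ∈ K₁) (ht : Tendsto t l atTop) {p v w : V}
    (hab : ∀ i, a i + b i = p + t i • v) (hw : Tendsto (fun i => (t i)⁻¹ • a i) l (𝓝 w)) :
    v ∈ asymptoticCone ℝ K₀ + asymptoticCone ℝ K₁ := by
  refine ⟨w, mem_asymptoticCone_of_tendsto ha ht hw, v - w,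
    mem_asymptoticCone_of_tendsto hb ht ?_, add_sub_cancel w v⟩
  have hlim : Tendsto (fun i => (t i)⁻¹ • p + v - (t i)⁻¹ • a i) l (𝓝 (v - w)) := by
    simpa using ((ht.inv_tendsto_atTop.smul_const p).add_const v).sub hw
  refine hlim.congr' ?_
  filter_upwards [ht.eventually_ne_atTop 0] with i hi
  rw [eq_sub_of_add_eq' (hab i), smul_sub, smul_add, inv_smul_smul₀ hi]

end AsymptoticCone

section LinearGrowth

variable {E : Type*} [NormedAddCommGroup E] [InnerProductSpace ℝ E] {K : Set E} {u : E}

theorem Convex.norm_sub_le_of_slice_subset_closedBall (hconv : Convex ℝ K) {x₀ x : E}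
    (hx₀ : x₀ ∈ K) (hx : x ∈ K) {R : ℝ}
    (hR : K ∩ {y | ⟪y, u⟫ ≤ ⟪x₀, u⟫ + 1} ⊆ closedBall x₀ R) (h : ⟪x₀, u⟫ + 1 ≤ ⟪x, u⟫) :
    ‖x - x₀‖ ≤ R * (⟪x, u⟫ - ⟪x₀, u⟫) := by
  set s := ⟪x, u⟫ - ⟪x₀, u⟫
  have hs : 0 < s := by linarith
  have hy : x₀ + s⁻¹ • (x - x₀) ∈ K :=
    hconv.add_smul_sub_mem hx₀ hx ⟨by positivity, inv_le_one_of_one_le₀ (by linarith)⟩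
  have hyu : ⟪x₀ + s⁻¹ • (x - x₀), u⟫ = ⟪x₀, u⟫ + 1 := by
    rw [inner_add_left, real_inner_smul_left, inner_sub_left, inv_mul_cancel₀ hs.ne']
  have hyR := hR ⟨hy, hyu.le⟩
  rw [mem_closedBall, dist_eq_norm, add_sub_cancel_left, norm_smul, Real.norm_eq_abs,
    abs_of_pos (inv_pos.2 hs), inv_mul_le_iff₀ hs] at hyR
  linarith

theorem exists_norm_le_mul_one_add_inner (hne : K.Nonempty) (hconv : Convex ℝ K)
    (hhalf : ∀ x ∈ K, 0 ≤ ⟪x, u⟫)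
    (hslice : ∀ t : ℝ, Bornology.IsBounded (K ∩ {x | ⟪x, u⟫ ≤ t})) :
    ∃ C, 0 ≤ C ∧ ∀ x ∈ K, ‖x‖ ≤ C * (1 + ⟪x, u⟫) := by
  obtain ⟨x₀, hx₀⟩ := hne
  obtain ⟨R, hR⟩ := (hslice (⟪x₀, u⟫ + 1)).subset_closedBall x₀
  have hR0 : 0 ≤ R := dist_self x₀ ▸ hR ⟨hx₀, by simp⟩
  refine ⟨‖x₀‖ + R, by positivity, fun x hx => ?_⟩
  have hsub : ‖x - x₀‖ ≤ R * (1 + ⟪x, u⟫) := by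
    by_cases h : ⟪x, u⟫ ≤ ⟪x₀, u⟫ + 1
    · have := hR ⟨hx, h⟩
      rw [mem_closedBall, dist_eq_norm] at this
      nlinarith [hhalf x hx]
    · have := hconv.norm_sub_le_of_slice_subset_closedBall hx₀ hx hR (not_le.1 h).le
      nlinarith [hhalf x₀ hx₀]
  calc ‖x‖ ≤ ‖x₀‖ + ‖x - x₀‖ := norm_le_norm_add_norm_sub' x x₀
    _ ≤ (‖x₀‖ + R) * (1 + ⟪x, u⟫) := by nlinarith [norm_nonneg x₀, hhalf x hx]

theorem exists_forall_norm_inv_smul_le (hne : K.Nonempty) (hconv : Convex ℝ K)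
    (hhalf : ∀ x ∈ K, 0 ≤ ⟪x, u⟫)
    (hslice : ∀ t : ℝ, Bornology.IsBounded (K ∩ {x | ⟪x, u⟫ ≤ t})) (c d : ℝ) :
    ∃ M, ∀ x ∈ K, ∀ s : ℝ, 1 ≤ s → ⟪x, u⟫ ≤ c + s * d → ‖s⁻¹ • x‖ ≤ M := by
  obtain ⟨C, hC, hCK⟩ := exists_norm_le_mul_one_add_inner hne hconv hhalf hslice
  refine ⟨C * (1 + |c| + d), fun x hx s hs hxs => ?_⟩
  rw [norm_smul, norm_inv, Real.norm_of_nonneg (by positivity), inv_mul_le_iff₀ (by positivity)]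
  have hcs : 1 + c ≤ s * (1 + |c|) := by nlinarith [le_abs_self c, abs_nonneg c]
  nlinarith [hCK x hx, mul_le_mul_of_nonneg_left hxs hC, mul_le_mul_of_nonneg_left hcs hC]

end LinearGrowth

theorem asymptoticCone_subset_recCone {n : ℕ} {K : Set (EuclideanSpace ℝ (Fin n))}
    (hconv : Convex ℝ K) (hcl : IsClosed K) : asymptoticCone ℝ K ⊆ recCone K :=
  fun v hv x hx t ht => by
    simpa only [vadd_eq_add, add_comm]
      using hconv.smul_vadd_mem_of_isClosed_of_mem_asymptoticCone hcl ht hv hx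

theorem recCone_add_recCone_subset {n : ℕ} (K₀ K₁ : Set (EuclideanSpace ℝ (Fin n))) :
    recCone K₀ + recCone K₁ ⊆ recCone (K₀ + K₁) := by
  rintro _ ⟨v₀, hv₀, v₁, hv₁, rfl⟩ _ ⟨x₀, hx₀, x₁, hx₁, rfl⟩ t ht
  rw [smul_add, add_add_add_comm]
  exact Set.add_mem_add (hv₀ x₀ hx₀ t ht) (hv₁ x₁ hx₁ t ht)

theorem recCone_minkowski_sum_general (n : ℕ) (u : EuclideanSpace ℝ (Fin n))
    (K₀ K₁ : Set (EuclideanSpace ℝ (Fin n)))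
    (h₀ne : K₀.Nonempty) (h₁ne : K₁.Nonempty)
    (h₀cl : IsClosed K₀) (h₁cl : IsClosed K₁)
    (h₀conv : Convex ℝ K₀) (h₁conv : Convex ℝ K₁)
    (h₀half : ∀ x ∈ K₀, 0 ≤ ⟪x, u⟫) (h₁half : ∀ x ∈ K₁, 0 ≤ ⟪x, u⟫)
    (h₀slice : ∀ t : ℝ, IsCompact (K₀ ∩ {x | ⟪x, u⟫ ≤ t})) :
    recCone (K₀ + K₁) = recCone K₀ + recCone K₁ := by
  refine subset_antisymm (fun v hv => ?_) (recCone_add_recCone_subset K₀ K₁)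
  obtain ⟨x₀, hx₀⟩ := h₀ne
  obtain ⟨x₁, hx₁⟩ := h₁ne
  set p := x₀ + x₁
  choose a ha b hb hab using fun k : ℕ =>
    hv p (Set.add_mem_add hx₀ hx₁) ((k : ℝ) + 1) (by positivity)
  obtain ⟨M, hM⟩ := exists_forall_norm_inv_smul_le ⟨x₀, hx₀⟩ h₀conv h₀half
    (fun t => (h₀slice t).isBounded) ⟪p, u⟫ ⟪v, u⟫
  have hbdd : ∀ k : ℕ, ((k : ℝ) + 1)⁻¹ • a k ∈ closedBall 0 M := by
    refine fun k => mem_closedBall_zero_iff.2 <| hM _ (ha k) _ (by simp) ?_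
    have := congrArg (⟪·, u⟫) (hab k)
    simp only [inner_add_left, real_inner_smul_left] at this
    linarith [h₁half _ (hb k)]
  obtain ⟨w, -, φ, hφ, hw⟩ := tendsto_subseq_of_bounded isBounded_closedBall hbdd
  have ht : Tendsto (fun k => (φ k : ℝ) + 1) atTop atTop :=
    tendsto_atTop_add_const_right _ 1 (tendsto_natCast_atTop_atTop.comp hφ.tendsto_atTop)
  exact Set.add_subset_add (asymptoticCone_subset_recCone h₀conv h₀cl)
    (asymptoticCone_subset_recCone h₁conv h₁cl)
    (mem_asymptoticCone_add_asymptoticCone_of_tendsto (fun k => ha (φ k)) (fun k => hb (φ k))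
      ht (fun k => hab (φ k)) hw)

/-- For nonempty closed convex sets `K₀, K₁ ⊆ ℝⁿ` lying in the half-space `{⟨·,u⟩ ≥ 0}` with
compact slices `Kᵢ ∩ {⟨·,u⟩ ≤ t}`, the recession cone of the Minkowski sum is the Minkowski sum
of the recession cones. -/
theorem recCone_minkowski_sum (n : ℕ) (u : EuclideanSpace ℝ (Fin n)) (hu : ‖u‖ = 1)
    (K₀ K₁ : Set (EuclideanSpace ℝ (Fin n)))
    (h₀ne : K₀.Nonempty) (h₁ne : K₁.Nonempty)
    (h₀cl : IsClosed K₀) (h₁cl : IsClosed K₁)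
    (h₀conv : Convex ℝ K₀) (h₁conv : Convex ℝ K₁)
    (h₀half : ∀ x ∈ K₀, 0 ≤ ⟪x, u⟫) (h₁half : ∀ x ∈ K₁, 0 ≤ ⟪x, u⟫)
    (h₀slice : ∀ t : ℝ, IsCompact (K₀ ∩ {x | ⟪x, u⟫ ≤ t}))
    (h₁slice : ∀ t : ℝ, IsCompact (K₁ ∩ {x | ⟪x, u⟫ ≤ t})) :
    recCone (K₀ + K₁) = recCone K₀ + recCone K₁ :=
  recCone_minkowski_sum_general n u K₀ K₁ h₀ne h₁ne h₀cl h₁cl h₀conv h₁conv h₀half h₁half h₀slice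
end

section
/- Let u ∈ ℝⁿ be a unit vector and let K₀, K₁ ⊆ ℝⁿ be unbounded convex bodies, each containing no line, and each having balanced support with respect to u. Then the Minkowski sum K := K₀ + K₁ is closed; moreover K is an unbounded convex body, K contains no line, and K has balanced support with respect to u. -/
/-!
An unbounded closed convex set in a finite-dimensional space contains a ray from each of its
points (normalise a divergent sequence and pass to a convergent subsequence), and a ray or line
in a closed convex set can be translated to start at any of its points. Hence balanced support
and the absence of lines make each support face `Fᵢ = {z ∈ Kᵢ | ⟪z, u⟫ = ⟪pᵢ, u⟫}` bounded.
The face of `K₀ + K₁` at `p₀ + p₁` lies in `F₀ + F₁`, so it is bounded too; this gives balanced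
support, and no line, since a line in the sum could be moved into that face.
If `aₖ + bₖ` converges with `aₖ ∈ K₀`, `bₖ ∈ K₁` and `aₖ` unbounded, normalising by
`‖aₖ - p₀‖` yields rays `p₀ + ℝ₊w ⊆ K₀` and `p₁ - ℝ₊w ⊆ K₁`; minimality in direction `u` forces
`⟪w, u⟫ = 0`, putting the first ray into the bounded face `F₀`. So `aₖ` is bounded and the
sum is closed.
-/

open scoped RealInnerProductSpace Pointwise

/-- A set `K ⊆ ℝⁿ` has *balanced support* with respect to `u` if `K` has a support hyperplane
with outward normal `-u`, and the corresponding face contains a half-line only when it contains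
the whole line. -/
def HasBalancedSupport {n : ℕ} (K : Set (EuclideanSpace ℝ (Fin n)))
    (u : EuclideanSpace ℝ (Fin n)) : Prop :=
  ∃ p ∈ K, (∀ x ∈ K, ⟪p, u⟫ ≤ ⟪x, u⟫) ∧
    ∀ x ∈ {z ∈ K | ⟪z, u⟫ = ⟪p, u⟫}, ∀ v : EuclideanSpace ℝ (Fin n), v ≠ 0 →
      (∀ t : ℝ, 0 ≤ t → x + t • v ∈ {z ∈ K | ⟪z, u⟫ = ⟪p, u⟫}) →
      ∀ t : ℝ, x + t • v ∈ {z ∈ K | ⟪z, u⟫ = ⟪p, u⟫}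

open Filter Topology Set Bornology

theorem exists_tendsto_norm_sub_of_not_isBounded {E : Type*} [SeminormedAddCommGroup E]
    {s : Set E} (hs : ¬ IsBounded s) (p : E) :
    ∃ x : ℕ → E, (∀ k, x k ∈ s) ∧ Tendsto (fun k => ‖x k - p‖) atTop atTop := by
  simp only [Metric.isBounded_iff_subset_closedBall p, not_exists, not_subset,
    Metric.mem_closedBall, not_le] at hs
  choose x hxs hx using fun k : ℕ => hs k
  refine ⟨x, hxs, tendsto_atTop_mono (fun k => ?_) tendsto_natCast_atTop_atTop⟩
  rw [← dist_eq_norm]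
  exact (hx k).le

section RecessionRays

variable {E : Type*} [NormedAddCommGroup E] [NormedSpace ℝ E] {C : Set E}

theorem Convex.add_smul_mem_of_tendsto (hconv : Convex ℝ C) (hcl : IsClosed C)
    {ι : Type*} {l : Filter ι} [l.NeBot] {p w : E} (hp : p ∈ C) {x : ι → E}
    (hx : ∀ᶠ i in l, x i ∈ C) {r : ι → ℝ} (hr : Tendsto r l atTop)
    (hw : Tendsto (fun i => (r i)⁻¹ • (x i - p)) l (𝓝 w)) {t : ℝ} (ht : 0 ≤ t) :
    p + t • w ∈ C := by
  refine hcl.mem_of_tendsto ((hw.const_smul t).const_add p) ?_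
  filter_upwards [hx, hr.eventually_ge_atTop (max t 1)] with i hxi hri
  have hr_pos : 0 < r i := by linarith [le_max_right t 1]
  rw [smul_smul]
  refine hconv.add_smul_sub_mem hp hxi ⟨by positivity, ?_⟩
  rw [← div_eq_mul_inv, div_le_one hr_pos]
  exact (le_max_left t 1).trans hri

theorem Convex.add_smul_mem_of_ray (hconv : Convex ℝ C) (hcl : IsClosed C) {x v z : E}
    (hray : ∀ t : ℝ, 0 ≤ t → x + t • v ∈ C) (hz : z ∈ C) {t : ℝ} (ht : 0 ≤ t) :
    z + t • v ∈ C := by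
  refine hconv.add_smul_mem_of_tendsto hcl hz (l := atTop) (x := fun s => x + s • v)
    (eventually_ge_atTop 0 |>.mono hray) tendsto_id ?_ ht
  have hlim : Tendsto (fun s : ℝ => s⁻¹ • (x - z) + v) atTop (𝓝 v) := by
    simpa using ((tendsto_inv_atTop_zero (𝕜 := ℝ)).smul_const (x - z)).add_const v
  refine hlim.congr' ?_
  filter_upwards [eventually_ne_atTop 0] with s hs
  dsimp only [id]
  rw [show x + s • v - z = (x - z) + s • v by abel, smul_add, smul_smul, inv_mul_cancel₀ hs,
    one_smul]

theorem Convex.add_smul_mem_of_line (hconv : Convex ℝ C) (hcl : IsClosed C) {x v z : E}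
    (hline : ∀ t : ℝ, x + t • v ∈ C) (hz : z ∈ C) (t : ℝ) : z + t • v ∈ C := by
  rcases le_total 0 t with ht | ht
  · exact hconv.add_smul_mem_of_ray hcl (fun s _ => hline s) hz ht
  · have hneg : ∀ s : ℝ, 0 ≤ s → x + s • -v ∈ C := fun s _ => by
      simpa only [smul_neg, ← neg_smul] using hline (-s)
    simpa only [smul_neg, ← neg_smul, neg_neg] using
      hconv.add_smul_mem_of_ray hcl hneg hz (neg_nonneg.mpr ht)

theorem Bornology.IsBounded.not_forall_add_smul_mem {S : Set E} (hS : IsBounded S) {x v : E}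
    (hv : v ≠ 0) : ¬ ∀ t : ℝ, 0 ≤ t → x + t • v ∈ S := by
  intro hray
  obtain ⟨M, hM⟩ := hS.exists_norm_le
  set t := (M + ‖x‖ + 1) / ‖v‖
  have hM0 : 0 ≤ M := (norm_nonneg _).trans (hM _ (hray 0 le_rfl))
  have ht : 0 ≤ t := by positivity
  have htv : ‖t • v‖ = M + ‖x‖ + 1 := by
    rw [norm_smul, Real.norm_of_nonneg ht, div_mul_cancel₀ _ (norm_ne_zero_iff.mpr hv)]
  have : ‖t • v‖ ≤ ‖x + t • v‖ + ‖x‖ := calc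
    ‖t • v‖ = ‖(x + t • v) - x‖ := by rw [add_sub_cancel_left]
    _ ≤ ‖x + t • v‖ + ‖x‖ := norm_sub_le _ _
  linarith [hM _ (hray t ht)]

variable [ProperSpace E]

theorem exists_subseq_tendsto_inv_norm_smul {x : ℕ → E}
    (hx : Tendsto (fun k => ‖x k‖) atTop atTop) :
    ∃ w : E, ‖w‖ = 1 ∧ ∃ φ : ℕ → ℕ, StrictMono φ ∧
      Tendsto (fun k => ‖x (φ k)‖⁻¹ • x (φ k)) atTop (𝓝 w) := by
  have hsphere : ∃ᶠ k in atTop, ‖x k‖⁻¹ • x k ∈ Metric.sphere (0 : E) 1 := by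
    refine (hx.eventually_gt_atTop 0).frequently.mono fun k hk => ?_
    rw [mem_sphere_zero_iff_norm]
    exact norm_smul_inv_norm (norm_pos_iff.mp hk)
  obtain ⟨w, hw, φ, hφ, hlim⟩ := (isCompact_sphere (0 : E) 1).tendsto_subseq' hsphere
  exact ⟨w, mem_sphere_zero_iff_norm.mp hw, φ, hφ, hlim⟩

theorem Convex.exists_ray_of_not_isBounded (hconv : Convex ℝ C) (hcl : IsClosed C)
    (hunb : ¬ IsBounded C) {p : E} (hp : p ∈ C) :
    ∃ w ≠ 0, ∀ t : ℝ, 0 ≤ t → p + t • w ∈ C := by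
  obtain ⟨x, hxC, hx⟩ := exists_tendsto_norm_sub_of_not_isBounded hunb p
  obtain ⟨w, hw, φ, hφ, hlim⟩ := exists_subseq_tendsto_inv_norm_smul hx
  exact ⟨w, norm_ne_zero_iff.mp (hw.trans_ne one_ne_zero), fun t ht =>
    hconv.add_smul_mem_of_tendsto hcl hp (.of_forall fun k => hxC (φ k))
      (hx.comp hφ.tendsto_atTop) hlim ht⟩

theorem exists_opposite_rays_of_tendsto_norm {K₀ K₁ : Set E} (h₀conv : Convex ℝ K₀)
    (h₀cl : IsClosed K₀) (h₁conv : Convex ℝ K₁) (h₁cl : IsClosed K₁) {p₀ p₁ : E}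
    (hp₀ : p₀ ∈ K₀) (hp₁ : p₁ ∈ K₁) {a b : ℕ → E} (ha : ∀ k, a k ∈ K₀) (hb : ∀ k, b k ∈ K₁)
    {M : ℝ} (hM : ∀ k, ‖a k + b k‖ ≤ M) (ha_lim : Tendsto (fun k => ‖a k - p₀‖) atTop atTop) :
    ∃ w ≠ 0, (∀ t : ℝ, 0 ≤ t → p₀ + t • w ∈ K₀) ∧ ∀ t : ℝ, 0 ≤ t → p₁ + t • -w ∈ K₁ := by
  obtain ⟨w, hw, φ, hφ, hw_lim⟩ := exists_subseq_tendsto_inv_norm_smul ha_lim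
  set r := fun k => ‖a (φ k) - p₀‖
  have hr : Tendsto r atTop atTop := ha_lim.comp hφ.tendsto_atTop
  have hsum : Tendsto (fun k => (r k)⁻¹ • (a (φ k) + b (φ k) - (p₀ + p₁))) atTop (𝓝 0) :=
    (tendsto_inv_atTop_zero.comp hr).zero_smul_isBoundedUnder_le <|
      isBoundedUnder_of ⟨M + ‖p₀ + p₁‖, fun k => (norm_sub_le _ _).trans (by grw [hM (φ k)])⟩
  have hb_lim : Tendsto (fun k => (r k)⁻¹ • (b (φ k) - p₁)) atTop (𝓝 (-w)) := by
    rw [← zero_sub]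
    refine (hsum.sub hw_lim).congr fun k => ?_
    rw [← smul_sub]
    congr 1
    abel
  exact ⟨w, norm_ne_zero_iff.mp (hw.trans_ne one_ne_zero),
    fun t ht => h₀conv.add_smul_mem_of_tendsto h₀cl hp₀ (.of_forall fun k => ha (φ k)) hr
      hw_lim ht,
    fun t ht => h₁conv.add_smul_mem_of_tendsto h₁cl hp₁ (.of_forall fun k => hb (φ k)) hr
      hb_lim ht⟩

theorem Convex.isClosed_add_of_forall_opposite_rays {K₀ K₁ : Set E} (h₀conv : Convex ℝ K₀)
    (h₀cl : IsClosed K₀) (h₁conv : Convex ℝ K₁) (h₁cl : IsClosed K₁) {p₀ p₁ : E}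
    (hp₀ : p₀ ∈ K₀) (hp₁ : p₁ ∈ K₁)
    (hopp : ∀ w : E, (∀ t : ℝ, 0 ≤ t → p₀ + t • w ∈ K₀) → (∀ t : ℝ, 0 ≤ t → p₁ + t • -w ∈ K₁) →
      w = 0) :
    IsClosed (K₀ + K₁) := by
  refine isClosed_of_closure_subset fun z hz => ?_
  obtain ⟨x, hxK, hx_lim⟩ := mem_closure_iff_seq_limit.mp hz
  choose a ha b hb hab using hxK
  obtain ⟨M, hM⟩ := hx_lim.norm.bddAbove_range
  have hM' : ∀ k, ‖a k + b k‖ ≤ M := fun k => (congrArg norm (hab k)).trans_le (hM ⟨k, rfl⟩)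
  have ha_bdd : IsBounded (range a) := by
    by_contra hunb
    obtain ⟨y, hy, hy_lim⟩ := exists_tendsto_norm_sub_of_not_isBounded hunb p₀
    choose ψ hψ using hy
    obtain ⟨w, hw, hw₀, hw₁⟩ := exists_opposite_rays_of_tendsto_norm h₀conv h₀cl h₁conv h₁cl
      hp₀ hp₁ (fun k => ha (ψ k)) (fun k => hb (ψ k)) (fun k => hM' (ψ k))
      (by simpa only [hψ] using hy_lim)
    exact hw (hopp w hw₀ hw₁)
  obtain ⟨α, -, φ, hφ, hα⟩ := tendsto_subseq_of_bounded ha_bdd (fun k => mem_range_self k)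
  have hβ : Tendsto (b ∘ φ) atTop (𝓝 (z - α)) :=
    ((hx_lim.comp hφ.tendsto_atTop).sub hα).congr fun k => by simp [← hab]
  exact ⟨α, h₀cl.mem_of_tendsto hα (.of_forall fun k => ha _), z - α,
    h₁cl.mem_of_tendsto hβ (.of_forall fun k => hb _), add_sub_cancel α z⟩

section SupportFace

variable {F : Type*} [NormedAddCommGroup F] [InnerProductSpace ℝ F] {K K₀ K₁ : Set F}
  {u p p₀ p₁ : F}

theorem eq_zero_of_ray_subset_of_isBounded_face (hF : IsBounded {z ∈ K | ⟪z, u⟫ = ⟪p, u⟫})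
    {w : F} (hray : ∀ t : ℝ, 0 ≤ t → p + t • w ∈ K) (hwu : ⟪w, u⟫ = 0) : w = 0 := by
  by_contra hw
  exact hF.not_forall_add_smul_mem hw fun t ht =>
    ⟨hray t ht, by rw [inner_add_left, real_inner_smul_left, hwu, mul_zero, add_zero]⟩

theorem not_exists_line_of_isBounded_face (hconv : Convex ℝ K) (hcl : IsClosed K) (hp : p ∈ K)
    (hmin : ∀ x ∈ K, ⟪p, u⟫ ≤ ⟪x, u⟫) (hF : IsBounded {z ∈ K | ⟪z, u⟫ = ⟪p, u⟫}) :
    ¬ ∃ x v : F, v ≠ 0 ∧ ∀ t : ℝ, x + t • v ∈ K := by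
  rintro ⟨x, v, hv, hline⟩
  have hline_p := hconv.add_smul_mem_of_line hcl hline hp
  have h_one := hmin _ (hline_p 1)
  have h_neg_one := hmin _ (hline_p (-1))
  simp only [inner_add_left, real_inner_smul_left] at h_one h_neg_one
  exact hv (eq_zero_of_ray_subset_of_isBounded_face hF (fun t _ => hline_p t) (by linarith))

theorem eq_zero_of_opposite_rays_of_isBounded_face (hmin₀ : ∀ x ∈ K₀, ⟪p₀, u⟫ ≤ ⟪x, u⟫)
    (hmin₁ : ∀ x ∈ K₁, ⟪p₁, u⟫ ≤ ⟪x, u⟫) (hF₀ : IsBounded {z ∈ K₀ | ⟪z, u⟫ = ⟪p₀, u⟫}) {w : F}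
    (hw₀ : ∀ t : ℝ, 0 ≤ t → p₀ + t • w ∈ K₀) (hw₁ : ∀ t : ℝ, 0 ≤ t → p₁ + t • -w ∈ K₁) :
    w = 0 := by
  have h₀ := hmin₀ _ (hw₀ 1 zero_le_one)
  have h₁ := hmin₁ _ (hw₁ 1 zero_le_one)
  simp only [inner_add_left, real_inner_smul_left, inner_neg_left] at h₀ h₁
  exact eq_zero_of_ray_subset_of_isBounded_face hF₀ hw₀ (by linarith)

theorem inner_add_le_of_mem_add (hmin₀ : ∀ x ∈ K₀, ⟪p₀, u⟫ ≤ ⟪x, u⟫)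
    (hmin₁ : ∀ x ∈ K₁, ⟪p₁, u⟫ ≤ ⟪x, u⟫) : ∀ z ∈ K₀ + K₁, ⟪p₀ + p₁, u⟫ ≤ ⟪z, u⟫ := by
  rintro _ ⟨a, ha, b, hb, rfl⟩
  rw [inner_add_left, inner_add_left]
  exact add_le_add (hmin₀ a ha) (hmin₁ b hb)

theorem isBounded_face_add (hmin₀ : ∀ x ∈ K₀, ⟪p₀, u⟫ ≤ ⟪x, u⟫)
    (hmin₁ : ∀ x ∈ K₁, ⟪p₁, u⟫ ≤ ⟪x, u⟫) (hF₀ : IsBounded {z ∈ K₀ | ⟪z, u⟫ = ⟪p₀, u⟫})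
    (hF₁ : IsBounded {z ∈ K₁ | ⟪z, u⟫ = ⟪p₁, u⟫}) :
    IsBounded {z ∈ K₀ + K₁ | ⟪z, u⟫ = ⟪p₀ + p₁, u⟫} := by
  refine (isBounded_add hF₀ hF₁).subset ?_
  rintro _ ⟨⟨a, ha, b, hb, rfl⟩, hab⟩
  rw [inner_add_left, inner_add_left] at hab
  have ha_min := hmin₀ a ha
  have hb_min := hmin₁ b hb
  exact ⟨a, ⟨ha, by linarith⟩, b, ⟨hb, by linarith⟩, rfl⟩

end SupportFace

theorem HasBalancedSupport.exists_isBounded_face {n : ℕ} {K : Set (EuclideanSpace ℝ (Fin n))}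
    {u : EuclideanSpace ℝ (Fin n)} (h : HasBalancedSupport K u) (hconv : Convex ℝ K)
    (hcl : IsClosed K)
    (hnoline : ¬ ∃ x v : EuclideanSpace ℝ (Fin n), v ≠ 0 ∧ ∀ t : ℝ, x + t • v ∈ K) :
    ∃ p ∈ K, (∀ x ∈ K, ⟪p, u⟫ ≤ ⟪x, u⟫) ∧ IsBounded {z ∈ K | ⟪z, u⟫ = ⟪p, u⟫} := by
  obtain ⟨p, hp, hmin, hface⟩ := h
  refine ⟨p, hp, hmin, by_contra fun hunb => ?_⟩
  have hFconv : Convex ℝ {z ∈ K | ⟪z, u⟫ = ⟪p, u⟫} :=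
    hconv.inter (convex_hyperplane ⟨fun x y => inner_add_left x y u,
      fun c x => real_inner_smul_left x u c⟩ _)
  have hFcl : IsClosed {z ∈ K | ⟪z, u⟫ = ⟪p, u⟫} :=
    hcl.inter (isClosed_eq (by fun_prop) continuous_const)
  obtain ⟨w, hw, hray⟩ := hFconv.exists_ray_of_not_isBounded hFcl hunb ⟨hp, rfl⟩
  exact hnoline ⟨p, w, hw, fun t => (hface p ⟨hp, rfl⟩ w hw hray t).1⟩

theorem hasBalancedSupport_of_isBounded_face {n : ℕ} {K : Set (EuclideanSpace ℝ (Fin n))}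
    {u p : EuclideanSpace ℝ (Fin n)} (hp : p ∈ K) (hmin : ∀ x ∈ K, ⟪p, u⟫ ≤ ⟪x, u⟫)
    (hF : IsBounded {z ∈ K | ⟪z, u⟫ = ⟪p, u⟫}) : HasBalancedSupport K u :=
  ⟨p, hp, hmin, fun _ _ _ hv hray => absurd hray (hF.not_forall_add_smul_mem hv)⟩

theorem minkowski_sum_balanced_support_general (n : ℕ) (u : EuclideanSpace ℝ (Fin n))
    (K₀ K₁ : Set (EuclideanSpace ℝ (Fin n)))
    (h₀cl : IsClosed K₀) (h₀conv : Convex ℝ K₀) (h₀int : (interior K₀).Nonempty)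
    (h₀unb : ¬ Bornology.IsBounded K₀)
    (h₀noline : ¬ ∃ x v : EuclideanSpace ℝ (Fin n), v ≠ 0 ∧ ∀ t : ℝ, x + t • v ∈ K₀)
    (h₀bal : HasBalancedSupport K₀ u)
    (h₁cl : IsClosed K₁) (h₁conv : Convex ℝ K₁)
    (h₁noline : ¬ ∃ x v : EuclideanSpace ℝ (Fin n), v ≠ 0 ∧ ∀ t : ℝ, x + t • v ∈ K₁)
    (h₁bal : HasBalancedSupport K₁ u) :
    IsClosed (K₀ + K₁) ∧ Convex ℝ (K₀ + K₁) ∧ (interior (K₀ + K₁)).Nonempty ∧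
      ¬ Bornology.IsBounded (K₀ + K₁) ∧
      (¬ ∃ x v : EuclideanSpace ℝ (Fin n), v ≠ 0 ∧ ∀ t : ℝ, x + t • v ∈ K₀ + K₁) ∧
      HasBalancedSupport (K₀ + K₁) u := by
  obtain ⟨p₀, hp₀, hmin₀, hF₀⟩ := h₀bal.exists_isBounded_face h₀conv h₀cl h₀noline
  obtain ⟨p₁, hp₁, hmin₁, hF₁⟩ := h₁bal.exists_isBounded_face h₁conv h₁cl h₁noline
  have hcl : IsClosed (K₀ + K₁) :=
    h₀conv.isClosed_add_of_forall_opposite_rays h₀cl h₁conv h₁cl hp₀ hp₁ fun _ hw₀ hw₁ =>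
      eq_zero_of_opposite_rays_of_isBounded_face hmin₀ hmin₁ hF₀ hw₀ hw₁
  have hconv : Convex ℝ (K₀ + K₁) := h₀conv.add h₁conv
  have hp : p₀ + p₁ ∈ K₀ + K₁ := add_mem_add hp₀ hp₁
  have hmin := inner_add_le_of_mem_add hmin₀ hmin₁
  have hF := isBounded_face_add hmin₀ hmin₁ hF₀ hF₁
  have hK₀_sub : K₀ ⊆ (K₀ + K₁) + {-p₁} := fun x hx =>
    ⟨x + p₁, add_mem_add hx hp₁, -p₁, rfl, add_neg_cancel_right x p₁⟩
  exact ⟨hcl, hconv, (h₀int.add ⟨p₁, hp₁⟩).mono subset_interior_add_left,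
    fun hbdd => h₀unb ((isBounded_add hbdd isBounded_singleton).subset hK₀_sub),
    not_exists_line_of_isBounded_face hconv hcl hp hmin hF,
    hasBalancedSupport_of_isBounded_face hp hmin hF⟩

/-- If `K₀, K₁ ⊆ ℝⁿ` are unbounded convex bodies containing no line, each with balanced support
with respect to the unit vector `u`, then `K = K₀ + K₁` is closed, is an unbounded convex body,
contains no line, and has balanced support with respect to `u`. -/
theorem minkowski_sum_balanced_support (n : ℕ) (u : EuclideanSpace ℝ (Fin n)) (hu : ‖u‖ = 1)
    (K₀ K₁ : Set (EuclideanSpace ℝ (Fin n)))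
    (h₀cl : IsClosed K₀) (h₀conv : Convex ℝ K₀) (h₀int : (interior K₀).Nonempty)
    (h₀unb : ¬ Bornology.IsBounded K₀)
    (h₀noline : ¬ ∃ x v : EuclideanSpace ℝ (Fin n), v ≠ 0 ∧ ∀ t : ℝ, x + t • v ∈ K₀)
    (h₀bal : HasBalancedSupport K₀ u)
    (h₁cl : IsClosed K₁) (h₁conv : Convex ℝ K₁) (h₁int : (interior K₁).Nonempty)
    (h₁unb : ¬ Bornology.IsBounded K₁)
    (h₁noline : ¬ ∃ x v : EuclideanSpace ℝ (Fin n), v ≠ 0 ∧ ∀ t : ℝ, x + t • v ∈ K₁)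
    (h₁bal : HasBalancedSupport K₁ u) :
    IsClosed (K₀ + K₁) ∧ Convex ℝ (K₀ + K₁) ∧ (interior (K₀ + K₁)).Nonempty ∧
      ¬ Bornology.IsBounded (K₀ + K₁) ∧
      (¬ ∃ x v : EuclideanSpace ℝ (Fin n), v ≠ 0 ∧ ∀ t : ℝ, x + t • v ∈ K₀ + K₁) ∧
      HasBalancedSupport (K₀ + K₁) u :=
  minkowski_sum_balanced_support_general n u K₀ K₁ h₀cl h₀conv h₀int h₀unb h₀noline h₀bal h₁cl
    h₁conv h₁noline h₁bal
end RecessionRays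
end

section
/- Let n ≥ 1, let u ∈ ℝⁿ be a unit vector, let K₀ ⊆ ℝⁿ be an unbounded convex body whose boundary ∂K₀ is homeomorphic to ℝⁿ⁻¹ and which has balanced support with respect to u, and let K₁ ⊆ ℝⁿ be an unbounded convex body containing no line which has balanced support with respect to u. Then K := K₀ + K₁ is closed, K is an unbounded convex body whose boundary ∂K is homeomorphic to ℝⁿ⁻¹, and K has balanced support with respect to u. -/
open scoped RealInnerProductSpace Pointwise

/-!
Everything is controlled by asymptotic (recession) cones. Balanced support together with the
absence of lines forces the asymptotic cone of `K₁` to meet `uᗮ` only in `0`. Hence no asymptotic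
direction of `K₁` is opposite to one of `K₀`, which makes `K₀ + K₁` closed, and the face of `K₁`
is bounded, so a half-line in the face of the sum is, asymptotically, a half-line in the face of
`K₀` and balanced support passes to the sum.

For the frontier, radial projection from an interior point identifies the frontier of a convex
body with the part of the unit sphere outside its asymptotic cone `C`; so only `C` matters.
The cone `C` of the sum lies in `{⟪·, u⟫ ≥ 0}` and, `K₁` being unbounded, contains some `w` with
`⟪w, u⟫ > 0`. This yields a unit vector `e ∈ C` with `⟪e, c⟫ ≥ 0` on `C`, and then the model body
`{x | dist(x, C)² ≤ ⟪e, x⟫}` has asymptotic cone `C` and frontier the graph of a continuous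
function on `(ℝ ∙ e)ᗮ ≅ ℝⁿ⁻¹`.
-/

open Filter Topology Set Metric Bornology AffineSpace Module

section AsymptoticCone

variable {V : Type*} [NormedAddCommGroup V] [NormedSpace ℝ V] {s A B K : Set V} {v x : V}

theorem mem_asymptoticCone_of_tendsto_s12 {α : Type*} {l : Filter α} [l.NeBot] {t : α → ℝ}
    {d : α → V} (ht : Tendsto t l atTop) (hd : Tendsto d l (𝓝 v))
    (hs : ∀ᶠ i in l, t i • d i ∈ s) : v ∈ asymptoticCone ℝ s :=
  (ht.atTop_smul_nhds_tendsto_asymptoticNhds hd).frequently hs.frequently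

theorem mem_asymptoticCone_of_forall_add_smul_mem (h : ∀ t : ℝ, 0 ≤ t → x + t • v ∈ s) :
    v ∈ asymptoticCone ℝ s :=
  ((tendsto_id.atTop_smul_const_tendsto_asymptoticNhds v).asymptoticNhds_vadd_const x).frequently
    ((eventually_ge_atTop 0).mono fun t ht => by simpa [add_comm] using h t ht).frequently

theorem Convex.add_smul_mem_of_mem_asymptoticCone (hK : Convex ℝ K) (hKc : IsClosed K)
    (hv : v ∈ asymptoticCone ℝ K) (hx : x ∈ K) {t : ℝ} (ht : 0 ≤ t) : x + t • v ∈ K := by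
  simpa [add_comm] using hK.smul_vadd_mem_of_isClosed_of_mem_asymptoticCone hKc ht hv hx

theorem asymptoticCone_vadd (a : V) (s : Set V) :
    asymptoticCone ℝ (a +ᵥ s) = asymptoticCone ℝ s := by
  ext v
  rw [mem_asymptoticCone_iff, mem_asymptoticCone_iff]
  conv_lhs => rw [← vadd_asymptoticNhds a v, ← Filter.map_vadd, frequently_map]
  simp only [vadd_mem_vadd_set_iff]

theorem asymptoticCone_subset_add_left (hA : A.Nonempty) :
    asymptoticCone ℝ B ⊆ asymptoticCone ℝ (A + B) := by
  obtain ⟨a, ha⟩ := hA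
  rw [← asymptoticCone_vadd a B]
  exact asymptoticCone_mono (vadd_set_subset_add ha)

theorem mem_asymptoticCone_of_forall_add_smul_mem_add (hB : IsBounded B)
    (h : ∀ t : ℝ, 0 ≤ t → x + t • v ∈ A + B) : v ∈ asymptoticCone ℝ A := by
  choose a ha b hb hab using fun k : ℕ => h (k + 1) (by positivity)
  obtain ⟨R, hR⟩ := hB.exists_norm_le
  have hbound : IsBoundedUnder (· ≤ ·) atTop (norm ∘ fun k => x - b k) :=
    isBoundedUnder_of ⟨‖x‖ + R, fun k => (norm_sub_le _ _).trans (by gcongr; exact hR _ (hb k))⟩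
  have htop : Tendsto (fun k : ℕ => (k : ℝ) + 1) atTop atTop :=
    tendsto_natCast_atTop_atTop.atTop_add tendsto_const_nhds
  have hlim : Tendsto (fun k : ℕ => ((k : ℝ) + 1)⁻¹ • (x - b k) + v) atTop (𝓝 (0 + v)) :=
    ((tendsto_inv_atTop_zero.comp htop).zero_smul_isBoundedUnder_le hbound).add_const v
  rw [zero_add] at hlim
  refine mem_asymptoticCone_of_tendsto_s12 htop hlim (.of_forall fun k => ?_)
  convert ha k using 1
  rw [smul_add, smul_inv_smul₀ (by positivity), eq_sub_of_add_eq (hab k)]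
  abel

variable [FiniteDimensional ℝ V]

theorem exists_ne_zero_mem_asymptoticCone_of_tendsto_add {a b : ℕ → V} {z : V}
    (ha : ∀ k, a k ∈ A) (hb : ∀ k, b k ∈ B) (hab : Tendsto (fun k => a k + b k) atTop (𝓝 z))
    (hb_top : Tendsto (‖b ·‖) atTop atTop) :
    ∃ v ≠ 0, v ∈ asymptoticCone ℝ B ∧ -v ∈ asymptoticCone ℝ A := by
  set d : ℕ → V := fun k => ‖b k‖⁻¹ • b k
  have hd : ∀ k, d k ∈ closedBall (0 : V) 1 := fun k => by
    rw [mem_closedBall_zero_iff, norm_smul, norm_inv, norm_norm]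
    exact inv_mul_le_one
  obtain ⟨v, -, φ, hφ, hdv⟩ := tendsto_subseq_of_bounded isBounded_closedBall hd
  have ht : Tendsto (fun k => ‖b (φ k)‖) atTop atTop := hb_top.comp hφ.tendsto_atTop
  have hpos : ∀ᶠ k in atTop, ‖b (φ k)‖ ≠ 0 := (ht.eventually_gt_atTop 0).mono fun _ h => h.ne'
  have hnorm : ‖v‖ = 1 := by
    refine tendsto_nhds_unique hdv.norm (tendsto_const_nhds.congr' ?_)
    filter_upwards [hpos] with k hk
    simp [d, norm_smul, hk]
  refine ⟨v, norm_ne_zero_iff.1 (by simp [hnorm]), ?_, ?_⟩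
  · refine mem_asymptoticCone_of_tendsto_s12 ht hdv ?_
    filter_upwards [hpos] with k hk
    simpa [d, smul_inv_smul₀ hk] using hb (φ k)
  · have hlim : Tendsto (fun k => ‖b (φ k)‖⁻¹ • (a (φ k) + b (φ k)) - d (φ k)) atTop
        (𝓝 ((0 : ℝ) • z - v)) :=
      (ht.inv_tendsto_atTop.smul (hab.comp hφ.tendsto_atTop)).sub hdv
    rw [zero_smul, zero_sub] at hlim
    refine mem_asymptoticCone_of_tendsto_s12 ht hlim ?_
    filter_upwards [hpos] with k hk
    simpa [d, smul_add, smul_inv_smul₀ hk] using ha (φ k)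

theorem isClosed_add_of_asymptoticCone (hA : IsClosed A) (hB : IsClosed B)
    (hAB : ∀ v ∈ asymptoticCone ℝ B, -v ∈ asymptoticCone ℝ A → v = 0) : IsClosed (A + B) := by
  rw [← isSeqClosed_iff_isClosed]
  intro y z hy hyz
  choose a ha b hb hab using hy
  replace hyz : Tendsto (fun k => a k + b k) atTop (𝓝 z) := by simpa only [hab] using hyz
  by_cases hbd : ∃ R, ∃ᶠ k in atTop, b k ∈ closedBall (0 : V) R
  · obtain ⟨R, hR⟩ := hbd
    obtain ⟨b₀, -, φ, hφ, hb₀⟩ := tendsto_subseq_of_frequently_bounded isBounded_closedBall hR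
    have ha₀ : Tendsto (fun k => a (φ k)) atTop (𝓝 (z - b₀)) := by
      simpa using (hyz.comp hφ.tendsto_atTop).sub hb₀
    have hmem := add_mem_add (hA.mem_of_tendsto ha₀ (.of_forall fun k => ha (φ k)))
      (hB.mem_of_tendsto hb₀ (.of_forall fun k => hb (φ k)))
    rwa [sub_add_cancel] at hmem
  · push Not at hbd
    have hb_top : Tendsto (‖b ·‖) atTop atTop := tendsto_atTop.2 fun R =>
      (hbd R).mono fun k hk => (by simpa using hk : R < ‖b k‖).le
    obtain ⟨v, hv, hvB, hvA⟩ := exists_ne_zero_mem_asymptoticCone_of_tendsto_add ha hb hyz hb_top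
    exact absurd (hAB v hvB hvA) hv

end AsymptoticCone

section Frontier

variable {V : Type*} [NormedAddCommGroup V] [NormedSpace ℝ V] {K L : Set V} {θ : V}

theorem Convex.mem_asymptoticCone_iff_forall_smul_mem (hK : Convex ℝ K) (h0 : K ∈ 𝓝 0) :
    θ ∈ asymptoticCone ℝ K ↔ ∀ t : ℝ, 0 ≤ t → t • θ ∈ K := by
  refine ⟨fun hθ t ht => ?_, fun h => mem_asymptoticCone_of_forall_add_smul_mem (x := 0) ?_⟩
  · simpa using hK.smul_vadd_mem_of_mem_nhds_of_mem_asymptoticCone ht h0 hθ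
  · simpa using h

theorem Convex.gauge_eq_zero_iff_forall_smul_mem (hK : Convex ℝ K) (h0 : K ∈ 𝓝 0) :
    gauge K θ = 0 ↔ ∀ t : ℝ, 0 ≤ t → t • θ ∈ K := by
  refine ⟨fun hθ t ht => ?_, fun h => ?_⟩
  · refine setOfPred_gauge_lt_one_subset_self hK (mem_of_mem_nhds h0) (absorbent_nhds_zero h0) ?_
    simp [gauge_smul_of_nonneg ht, hθ]
  · refine le_antisymm (le_of_forall_pos_le_add fun ε hε => ?_) (gauge_nonneg θ)
    rw [zero_add]
    refine gauge_le_of_mem hε.le ?_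
    rw [mem_smul_set_iff_inv_smul_mem₀ hε.ne']
    exact h _ (inv_nonneg.2 hε.le)

theorem Convex.gauge_eq_zero_iff_mem_asymptoticCone (hK : Convex ℝ K) (h0 : K ∈ 𝓝 0) :
    gauge K θ = 0 ↔ θ ∈ asymptoticCone ℝ K :=
  (hK.gauge_eq_zero_iff_forall_smul_mem h0).trans
    (hK.mem_asymptoticCone_iff_forall_smul_mem h0).symm

theorem Convex.nonempty_frontier_homeomorph_sphere_diff (hK : Convex ℝ K) (h0 : K ∈ 𝓝 0) :
    Nonempty (frontier K ≃ₜ ↥(sphere (0 : V) 1 \ asymptoticCone ℝ K)) := by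
  have hx0 : ∀ x ∈ frontier K, ‖x‖ ≠ 0 := fun x hx h =>
    hx.2 (norm_eq_zero.1 h ▸ mem_interior_iff_mem_nhds.2 h0)
  have hgx : ∀ x ∈ frontier K, gauge K x = 1 := fun x hx =>
    (gauge_eq_one_iff_mem_frontier hK h0).2 hx
  have hgθ : ∀ θ ∉ asymptoticCone ℝ K, 0 < gauge K θ := fun θ hθ =>
    (gauge_nonneg θ).lt_of_ne' (mt (hK.gauge_eq_zero_iff_mem_asymptoticCone h0).1 hθ)
  refine ⟨{
    toFun := fun x => ⟨‖(x : V)‖⁻¹ • (x : V), ?_⟩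
    invFun := fun θ => ⟨(gauge K θ)⁻¹ • (θ : V), ?_⟩
    left_inv := fun x => ?_
    right_inv := fun θ => ?_
    continuous_toFun := ?_
    continuous_invFun := ?_ }⟩
  · refine ⟨by simp [norm_smul, hx0 x x.2], fun hθ => ?_⟩
    rw [← hK.gauge_eq_zero_iff_mem_asymptoticCone h0, gauge_smul_of_nonneg (by positivity),
      hgx x x.2] at hθ
    simp [hx0 x x.2] at hθ
  · rw [← gauge_eq_one_iff_mem_frontier hK h0,
      gauge_smul_of_nonneg (inv_nonneg.2 (gauge_nonneg _)), smul_eq_mul,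
      inv_mul_cancel₀ (hgθ θ θ.2.2).ne']
  · ext1
    simp only
    rw [gauge_smul_of_nonneg (by positivity), hgx x x.2, smul_eq_mul, mul_one, inv_inv,
      smul_inv_smul₀ (hx0 x x.2)]
  · have hg := hgθ θ θ.2.2
    have hθ1 : ‖(θ : V)‖ = 1 := by simpa using θ.2.1
    ext1
    simp only
    rw [norm_smul, norm_inv, Real.norm_of_nonneg hg.le, hθ1, mul_one, inv_inv,
      smul_inv_smul₀ hg.ne']
  · exact (continuous_subtype_val.norm.inv₀ fun x => hx0 x x.2).smul
      continuous_subtype_val |>.subtype_mk _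
  · exact ((continuous_gauge hK h0).comp continuous_subtype_val |>.inv₀ fun θ =>
      (hgθ _ θ.2.2).ne').smul continuous_subtype_val |>.subtype_mk _

theorem Convex.nonempty_frontier_homeomorph_sphere_diff_of_mem_interior (hK : Convex ℝ K)
    {z : V} (hz : z ∈ interior K) :
    Nonempty (frontier K ≃ₜ ↥(sphere (0 : V) 1 \ asymptoticCone ℝ K)) := by
  have himage : Homeomorph.addLeft (-z) '' K = -z +ᵥ K := image_vadd (a := -z) (t := K)
  have h0 : -z +ᵥ K ∈ 𝓝 0 := by
    rw [← mem_interior_iff_mem_nhds, interior_vadd, ← neg_add_cancel z]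
    exact vadd_mem_vadd_set hz
  obtain ⟨e⟩ := (hK.vadd (-z)).nonempty_frontier_homeomorph_sphere_diff h0
  rw [asymptoticCone_vadd] at e
  exact ⟨((Homeomorph.addLeft (-z)).image (frontier K)).trans <|
    (Homeomorph.setCongr (by rw [Homeomorph.image_frontier, himage])).trans e⟩

theorem Convex.nonempty_frontier_homeomorph_of_asymptoticCone_eq (hK : Convex ℝ K)
    (hL : Convex ℝ L) (hKi : (interior K).Nonempty) (hLi : (interior L).Nonempty)
    (hKL : asymptoticCone ℝ K = asymptoticCone ℝ L) : Nonempty (frontier K ≃ₜ frontier L) := by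
  obtain ⟨eK⟩ := hK.nonempty_frontier_homeomorph_sphere_diff_of_mem_interior hKi.some_mem
  obtain ⟨eL⟩ := hL.nonempty_frontier_homeomorph_sphere_diff_of_mem_interior hLi.some_mem
  rw [hKL] at eK
  exact ⟨eK.trans eL.symm⟩

end Frontier

section Graph

variable {V : Type*} [NormedAddCommGroup V] [InnerProductSpace ℝ V] {f : V → ℝ} {e : V}

theorem frontier_setOf_nonpos_of_strictAnti (hf : Continuous f)
    (hanti : ∀ x, StrictAnti fun t : ℝ => f (x + t • e)) :
    frontier {x | f x ≤ 0} = {x | f x = 0} := by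
  rw [(isClosed_le hf continuous_const).frontier_eq]
  ext x
  refine ⟨fun ⟨hx, hxi⟩ => hx.antisymm (not_lt.1 fun hlt => hxi ?_),
    fun (hx : f x = 0) => ⟨hx.le, fun hxi => ?_⟩⟩
  · exact interior_maximal (fun y (hy : f y < 0) => hy.le) (isOpen_lt hf continuous_const) hlt
  · have hline : Tendsto (fun t : ℝ => x + t • e) (𝓝[<] 0) (𝓝 x) := by
      have : Continuous fun t : ℝ => x + t • e := by fun_prop
      simpa using (this.tendsto 0).mono_left nhdsWithin_le_nhds
    obtain ⟨t, ht, (ht0 : t < 0)⟩ :=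
      ((hline.eventually (mem_interior_iff_mem_nhds.1 hxi)).and self_mem_nhdsWithin).exists
    have : f (x + (0 : ℝ) • e) < f (x + t • e) := hanti x ht0
    rw [zero_smul, add_zero] at this
    linarith

theorem continuous_of_apply_add_smul_eq_zero (hf : Continuous f)
    (hanti : ∀ x, StrictAnti fun t : ℝ => f (x + t • e)) {h : V → ℝ}
    (hh : ∀ x, f (x + h x • e) = 0) : Continuous h := by
  have hcont : ∀ y : ℝ, Continuous fun x => f (x + y • e) := fun y => by fun_prop
  rw [continuous_iff_lower_upperSemicontinuous, lowerSemicontinuous_iff_isOpen_preimage,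
    upperSemicontinuous_iff_isOpen_preimage]
  refine ⟨fun y => ?_, fun y => ?_⟩
  · convert isOpen_lt (continuous_const : Continuous fun _ : V => (0 : ℝ)) (hcont y) using 1
    ext x
    simp only [mem_preimage, mem_Ioi, mem_ofPred_eq]
    rw [← hh x]
    exact (hanti x).lt_iff_gt.symm
  · convert isOpen_lt (hcont y) (continuous_const : Continuous fun _ : V => (0 : ℝ)) using 1
    ext x
    simp only [mem_preimage, mem_Iio, mem_ofPred_eq]
    rw [← hh x]
    exact (hanti x).lt_iff_gt.symm

theorem nonempty_homeomorph_orthogonal_of_strictAnti (hf : Continuous f)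
    (hanti : ∀ x, StrictAnti fun t : ℝ => f (x + t • e))
    (hzero : ∀ x, ∃ t : ℝ, f (x + t • e) = 0) (he : ‖e‖ = 1) :
    Nonempty ({x | f x = 0} ≃ₜ (ℝ ∙ e)ᗮ) := by
  choose h hh using hzero
  have hee : ⟪e, e⟫ = 1 := by rw [real_inner_self_eq_norm_sq, he, one_pow]
  have hq : ∀ x : V, x - ⟪e, x⟫ • e ∈ (ℝ ∙ e)ᗮ := fun x => by
    rw [Submodule.mem_orthogonal_singleton_iff_inner_right, inner_sub_right,
      real_inner_smul_right, hee, mul_one, sub_self]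
  refine ⟨{
    toFun := fun x => ⟨(x : V) - ⟪e, (x : V)⟫ • e, hq x⟩
    invFun := fun w => ⟨w + h w • e, hh w⟩
    left_inv := fun x => ?_
    right_inv := fun w => ?_
    continuous_toFun := by fun_prop
    continuous_invFun :=
      (continuous_subtype_val.add (((continuous_of_apply_add_smul_eq_zero hf hanti hh).comp
        continuous_subtype_val).smul continuous_const)).subtype_mk _ }⟩
  · have hx : h ((x : V) - ⟪e, (x : V)⟫ • e) = ⟪e, (x : V)⟫ := (hanti _).injective <| by
      rw [hh, sub_add_cancel]
      exact x.2.symm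
    ext1
    simp [hx]
  · have hw : ⟪e, (w : V)⟫ = 0 := Submodule.mem_orthogonal_singleton_iff_inner_right.1 w.2
    ext1
    simp [inner_add_right, real_inner_smul_right, hw, he]

end Graph

section ModelBody

variable {V : Type*} [NormedAddCommGroup V] [InnerProductSpace ℝ V]

def Convex.asymptoticPointedCone {K : Set V} (hK : Convex ℝ K) (hne : K.Nonempty) :
    PointedCone ℝ V where
  carrier := asymptoticCone ℝ K
  add_mem' {v w} hv hw := by
    have hmid := hK.asymptoticCone hv hw (by norm_num : (0 : ℝ) ≤ 2⁻¹)
      (by norm_num : (0 : ℝ) ≤ 2⁻¹) (by norm_num)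
    simpa [← smul_add, smul_smul] using smul_mem_asymptoticCone (c := (2 : ℝ)) (by norm_num) hmid
  zero_mem' := zero_mem_asymptoticCone.2 hne
  smul_mem' c _ hv := smul_mem_asymptoticCone c.2 hv

theorem PointedCone.exists_unit_mem_forall_inner_nonneg [CompleteSpace V] (C : PointedCone ℝ V)
    (hC : IsClosed (C : Set V)) {u w : V} (hu : ∀ c ∈ C, 0 ≤ ⟪c, u⟫) (hw : w ∈ C)
    (hwu : 0 < ⟪w, u⟫) : ∃ e ∈ C, ‖e‖ = 1 ∧ ∀ c ∈ C, 0 ≤ ⟪e, c⟫ := by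
  set T : Set V := (C : Set V) ∩ {x | ⟪x, u⟫ = 1}
  have hTconv : Convex ℝ T := C.convex.inter <|
    convex_hyperplane ⟨fun x y => inner_add_left x y u, fun r x => real_inner_smul_left x u r⟩ 1
  have hTcl : IsClosed T := hC.inter (isClosed_eq (by fun_prop) continuous_const)
  have hTne : T.Nonempty :=
    ⟨⟪w, u⟫⁻¹ • w, C.smul_mem (by positivity) hw, by simp [real_inner_smul_left, hwu.ne']⟩
  -- the point `z` of the slice `T` nearest to `0` is an inward normal of `C`
  obtain ⟨z, ⟨hzC, hzu : ⟪z, u⟫ = 1⟩, hz⟩ :=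
    exists_norm_eq_iInf_of_complete_convex hTne hTcl.isComplete hTconv 0
  have hvar : ∀ x ∈ T, 0 ≤ ⟪z, x - z⟫ := fun x hx => by
    have := (norm_eq_iInf_iff_real_inner_le_zero hTconv ⟨hzC, hzu⟩).1 hz x hx
    rwa [zero_sub, inner_neg_left, neg_nonpos] at this
  have hz0 : z ≠ 0 := by rintro rfl; simp at hzu
  have hzc : ∀ c ∈ C, 0 ≤ ⟪z, c⟫ := fun c hc => by
    have hs := hu c hc
    have hx : (1 + ⟪c, u⟫)⁻¹ • (z + c) ∈ T :=
      ⟨C.smul_mem (by positivity) (C.add_mem hzC hc), by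
        simp only [mem_ofPred_eq, real_inner_smul_left, inner_add_left, hzu]
        exact inv_mul_cancel₀ (by positivity)⟩
    have h := hvar _ hx
    rw [inner_sub_right, real_inner_smul_right, inner_add_right, real_inner_self_eq_norm_sq,
      sub_nonneg, le_inv_mul_iff₀ (by positivity)] at h
    nlinarith [sq_nonneg ‖z‖]
  refine ⟨‖z‖⁻¹ • z, C.smul_mem (by positivity) hzC, by simp [norm_smul, hz0], fun c hc => ?_⟩
  rw [real_inner_smul_left]
  exact mul_nonneg (by positivity) (hzc c hc)

theorem Convex.convexOn_infDist {C : Set V} (hC : Convex ℝ C) :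
    ConvexOn ℝ univ (infDist · C) := by
  rcases C.eq_empty_or_nonempty with rfl | hne
  · simpa using convexOn_const (0 : ℝ) convex_univ
  refine ⟨convex_univ, fun x _ y _ a b ha hb hab => le_of_forall_pos_le_add fun ε hε => ?_⟩
  obtain ⟨c₁, hc₁, h₁⟩ := (infDist_lt_iff hne).1 (lt_add_of_pos_right (infDist x C) hε)
  obtain ⟨c₂, hc₂, h₂⟩ := (infDist_lt_iff hne).1 (lt_add_of_pos_right (infDist y C) hε)
  calc infDist (a • x + b • y) C
      ≤ dist (a • x + b • y) (a • c₁ + b • c₂) := infDist_le_dist_of_mem (hC hc₁ hc₂ ha hb hab)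
    _ ≤ a * dist x c₁ + b * dist y c₂ := by
      rw [dist_eq_norm, dist_eq_norm, dist_eq_norm,
        show a • x + b • y - (a • c₁ + b • c₂) = a • (x - c₁) + b • (y - c₂) by module]
      refine (norm_add_le _ _).trans_eq ?_
      rw [norm_smul, norm_smul, Real.norm_of_nonneg ha, Real.norm_of_nonneg hb]
    _ ≤ a * (infDist x C + ε) + b * (infDist y C + ε) := by gcongr
    _ = a • infDist x C + b • infDist y C + ε := by
      simp only [smul_eq_mul]
      linear_combination ε * hab

theorem PointedCone.infDist_add_le (C : PointedCone ℝ V) {c : V} (hc : c ∈ C) (x : V) :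
    infDist (x + c) C ≤ infDist x C := by
  refine le_of_forall_pos_le_add fun ε hε => ?_
  obtain ⟨y, hy, hxy⟩ :=
    (infDist_lt_iff ⟨0, C.zero_mem⟩).1 (lt_add_of_pos_right (infDist x C) hε)
  calc infDist (x + c) C ≤ dist (x + c) (y + c) := infDist_le_dist_of_mem (C.add_mem hy hc)
    _ ≤ infDist x C + ε := by rw [dist_add_right]; exact hxy.le

theorem PointedCone.infDist_smul (C : PointedCone ℝ V) {t : ℝ} (ht : 0 ≤ t) (x : V) :
    infDist (t • x) C = t * infDist x C := by
  rcases ht.eq_or_lt with rfl | ht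
  · simp [infDist_zero_of_mem C.zero_mem]
  have hCt : t • (C : Set V) = C := by
    ext y
    rw [mem_smul_set_iff_inv_smul_mem₀ ht.ne']
    exact ⟨fun h => by simpa [smul_inv_smul₀ ht.ne'] using C.smul_mem ht.le h,
      fun h => C.smul_mem (inv_nonneg.2 ht.le) h⟩
  calc infDist (t • x) C = infDist (t • x) (t • (C : Set V)) := by rw [hCt]
    _ = t * infDist x C := by rw [infDist_smul₀ ht.ne', Real.norm_of_nonneg ht.le]

/-- For a closed convex cone `C` and a unit vector `e ∈ C` with `⟪e, C⟫ ≥ 0`, a convex body with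
asymptotic cone `C` whose frontier is a graph over `(ℝ ∙ e)ᗮ`. -/
def parabolicHull (C : Set V) (e : V) : Set V := {x | infDist x C ^ 2 - ⟪e, x⟫ ≤ 0}

theorem continuous_infDist_sq_sub_inner (C : Set V) (e : V) :
    Continuous fun x => infDist x C ^ 2 - ⟪e, x⟫ :=
  ((continuous_infDist_pt C).pow 2).sub (continuous_const.inner continuous_id)

theorem isClosed_parabolicHull (C : Set V) (e : V) : IsClosed (parabolicHull C e) :=
  isClosed_le (continuous_infDist_sq_sub_inner C e) continuous_const

theorem convex_parabolicHull {C : Set V} (hC : Convex ℝ C) (e : V) :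
    Convex ℝ (parabolicHull C e) := by
  have h := ((hC.convexOn_infDist.pow (fun _ _ => infDist_nonneg) 2).sub
    ((innerₛₗ ℝ e).concaveOn convex_univ)).convex_le 0
  unfold parabolicHull
  simpa using h

namespace PointedCone

variable (C : PointedCone ℝ V) {e : V}

theorem asymptoticCone_parabolicHull (hC : IsClosed (C : Set V)) (hCe : ∀ c ∈ C, 0 ≤ ⟪e, c⟫) :
    asymptoticCone ℝ (parabolicHull (C : Set V) e) = C := by
  ext v
  refine ⟨fun hv => ?_, fun hv => mem_asymptoticCone_of_forall_add_smul_mem (x := 0)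
    fun t ht => ?_⟩
  · have h0 : (0 : V) ∈ parabolicHull (C : Set V) e := by
      simp [parabolicHull, infDist_zero_of_mem C.zero_mem]
    have hray : ∀ k : ℕ, 0 < k → infDist v C ^ 2 ≤ ⟪e, v⟫ / k := fun k hk => by
      have := (convex_parabolicHull C.convex e).add_smul_mem_of_mem_asymptoticCone
        (isClosed_parabolicHull (C : Set V) e) hv h0 (Nat.cast_nonneg k)
      simp only [parabolicHull, mem_ofPred_eq, zero_add, C.infDist_smul (Nat.cast_nonneg k),
        real_inner_smul_right, mul_pow, sub_nonpos] at this
      have hk' : (0 : ℝ) < k := Nat.cast_pos.2 hk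
      rw [le_div_iff₀ hk']
      nlinarith
    have hd : infDist v C = 0 := by
      have := ge_of_tendsto (tendsto_const_div_atTop_nhds_zero_nat ⟪e, v⟫)
        ((eventually_gt_atTop 0).mono hray)
      nlinarith [infDist_nonneg (x := v) (s := C)]
    simpa [hC.closure_eq] using (mem_closure_iff_infDist_zero ⟨0, C.zero_mem⟩).2 hd
  · simp [parabolicHull, infDist_zero_of_mem (C.smul_mem ht hv), real_inner_smul_right,
      mul_nonneg ht (hCe v hv)]

theorem mem_interior_parabolicHull (he : ‖e‖ = 1) (heC : e ∈ C) :
    e ∈ interior (parabolicHull (C : Set V) e) := by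
  refine interior_maximal (fun x (hx : infDist x C ^ 2 - ⟪e, x⟫ < 0) => hx.le)
    (isOpen_lt (continuous_infDist_sq_sub_inner (C : Set V) e) continuous_const) ?_
  change infDist e C ^ 2 - ⟪e, e⟫ < 0
  simp [infDist_zero_of_mem heC, he]

theorem strictAnti_infDist_sq_sub_inner (he : ‖e‖ = 1) (heC : e ∈ C) (x : V) :
    StrictAnti fun t : ℝ => infDist (x + t • e) C ^ 2 - ⟪e, x + t • e⟫ := by
  intro s t hst
  have hdist : infDist (x + t • e) C ≤ infDist (x + s • e) C := by
    simpa [add_assoc, ← add_smul] using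
      C.infDist_add_le (C.smul_mem (sub_nonneg.2 hst.le) heC) (x + s • e)
  have hsq := pow_le_pow_left₀ infDist_nonneg hdist 2
  simp only [inner_add_right, real_inner_smul_right, real_inner_self_eq_norm_sq, he]
  linarith

theorem exists_infDist_sq_sub_inner_eq_zero (he : ‖e‖ = 1) (heC : e ∈ C) (x : V) :
    ∃ t : ℝ, infDist (x + t • e) C ^ 2 - ⟪e, x + t • e⟫ = 0 := by
  have hee : ⟪e, e⟫ = 1 := by rw [real_inner_self_eq_norm_sq, he, one_pow]
  have hg : Continuous fun t : ℝ => infDist (x + t • e) C ^ 2 - ⟪e, x + t • e⟫ :=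
    (continuous_infDist_sq_sub_inner (C : Set V) e).comp (by fun_prop)
  set b := ‖x‖ ^ 2 + ‖x‖
  have hb : infDist (x + b • e) C ^ 2 - ⟪e, x + b • e⟫ ≤ 0 := by
    have hdist : infDist (x + b • e) C ≤ ‖x‖ := by
      have hbe : b • e ∈ (C : Set V) := C.smul_mem (by positivity) heC
      simpa using infDist_le_dist_of_mem (x := x + b • e) hbe
    have hx : -⟪e, x⟫ ≤ ‖x‖ := by
      simpa [he] using neg_le.1 <| neg_le_of_abs_le (abs_real_inner_le_norm e x)
    have := pow_le_pow_left₀ infDist_nonneg hdist 2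
    simp only [inner_add_right, real_inner_smul_right, hee]
    linarith
  have ha : 0 ≤ infDist (x + (-⟪e, x⟫) • e) C ^ 2 - ⟪e, x + (-⟪e, x⟫) • e⟫ := by
    simp only [inner_add_right, real_inner_smul_right, hee]
    nlinarith [infDist_nonneg (x := x + (-⟪e, x⟫) • e) (s := C)]
  exact intermediate_value_univ b (-⟪e, x⟫) hg ⟨hb, ha⟩

end PointedCone

variable [FiniteDimensional ℝ V] {K : Set V} {u w : V}

theorem Convex.nonempty_frontier_homeomorph_orthogonal (hK : Convex ℝ K)
    (hKi : (interior K).Nonempty) (hu : ∀ v ∈ asymptoticCone ℝ K, 0 ≤ ⟪v, u⟫)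
    (hw : w ∈ asymptoticCone ℝ K) (hwu : 0 < ⟪w, u⟫) :
    ∃ e : V, e ≠ 0 ∧ Nonempty (frontier K ≃ₜ (ℝ ∙ e)ᗮ) := by
  set C := hK.asymptoticPointedCone (hKi.mono interior_subset)
  obtain ⟨e, heC, he, hCe⟩ :=
    C.exists_unit_mem_forall_inner_nonneg isClosed_asymptoticCone hu hw hwu
  have hf := continuous_infDist_sq_sub_inner (C : Set V) e
  have hanti := C.strictAnti_infDist_sq_sub_inner he heC
  obtain ⟨φ⟩ := hK.nonempty_frontier_homeomorph_of_asymptoticCone_eq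
    (convex_parabolicHull C.convex e) hKi ⟨e, C.mem_interior_parabolicHull he heC⟩
    (C.asymptoticCone_parabolicHull isClosed_asymptoticCone hCe).symm
  obtain ⟨ψ⟩ := nonempty_homeomorph_orthogonal_of_strictAnti hf hanti
    (C.exists_infDist_sq_sub_inner_eq_zero he heC) he
  refine ⟨e, norm_ne_zero_iff.1 (by simp [he]), ⟨φ.trans ?_⟩⟩
  exact (Homeomorph.setCongr (frontier_setOf_nonpos_of_strictAnti hf hanti)).trans ψ

theorem Convex.nonempty_frontier_homeomorph_euclideanSpace (hK : Convex ℝ K)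
    (hKi : (interior K).Nonempty) (hu : ∀ v ∈ asymptoticCone ℝ K, 0 ≤ ⟪v, u⟫)
    (hw : w ∈ asymptoticCone ℝ K) (hwu : 0 < ⟪w, u⟫) :
    Nonempty (frontier K ≃ₜ EuclideanSpace ℝ (Fin (finrank ℝ V - 1))) := by
  obtain ⟨e, he, ⟨φ⟩⟩ := hK.nonempty_frontier_homeomorph_orthogonal hKi hu hw hwu
  have hdim : finrank ℝ (ℝ ∙ e)ᗮ = finrank ℝ (EuclideanSpace ℝ (Fin (finrank ℝ V - 1))) := by
    have := (ℝ ∙ e).finrank_add_finrank_orthogonal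
    rw [finrank_span_singleton he] at this
    rw [finrank_euclideanSpace_fin]
    omega
  exact ⟨φ.trans (ContinuousLinearEquiv.ofFinrankEq hdim).toHomeomorph⟩

end ModelBody

section Face

variable {V : Type*} [NormedAddCommGroup V] [InnerProductSpace ℝ V] {K : Set V} {u v : V}

theorem Convex.sep_inner_eq (hK : Convex ℝ K) (u : V) (c : ℝ) :
    Convex ℝ {z ∈ K | ⟪z, u⟫ = c} :=
  hK.inter <| convex_hyperplane
    ⟨fun x y => inner_add_left x y u, fun r x => real_inner_smul_left x u r⟩ c

theorem IsClosed.sep_inner_eq (hK : IsClosed K) (u : V) (c : ℝ) :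
    IsClosed {z ∈ K | ⟪z, u⟫ = c} :=
  hK.inter (isClosed_eq (by fun_prop) continuous_const)

theorem inner_nonneg_of_mem_asymptoticCone {p : V} (hK : Convex ℝ K) (hKc : IsClosed K)
    (hp : p ∈ K) (hmin : ∀ x ∈ K, ⟪p, u⟫ ≤ ⟪x, u⟫) (hv : v ∈ asymptoticCone ℝ K) :
    0 ≤ ⟪v, u⟫ := by
  have := hmin _ (hK.add_smul_mem_of_mem_asymptoticCone hKc hv hp zero_le_one)
  rwa [one_smul, inner_add_left, le_add_iff_nonneg_right] at this

theorem isBounded_sep_inner_eq [FiniteDimensional ℝ V] (hK : Convex ℝ K) (hKc : IsClosed K)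
    (hKu : ∀ v ∈ asymptoticCone ℝ K, ⟪v, u⟫ = 0 → v = 0) (c : ℝ) :
    IsBounded {z ∈ K | ⟪z, u⟫ = c} := by
  by_contra h
  obtain ⟨v, hv0, hv⟩ := not_bounded_iff_exists_ne_zero_mem_asymptoticCone.1 h
  obtain ⟨x, hx⟩ := asymptoticCone_nonempty.1 ⟨v, hv⟩
  have hxv := ((hK.sep_inner_eq u c).add_smul_mem_of_mem_asymptoticCone (hKc.sep_inner_eq u c)
    hv hx zero_le_one).2
  rw [one_smul, inner_add_left, hx.2, add_eq_left] at hxv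
  exact hv0 (hKu v (asymptoticCone_mono (sep_subset K _) hv) hxv)

end Face

namespace HasBalancedSupport

variable {n : ℕ} {K K₀ K₁ : Set (EuclideanSpace ℝ (Fin n))} {u v : EuclideanSpace ℝ (Fin n)}

theorem inner_nonneg_of_mem_asymptoticCone (h : HasBalancedSupport K u) (hK : Convex ℝ K)
    (hKc : IsClosed K) (hv : v ∈ asymptoticCone ℝ K) : 0 ≤ ⟪v, u⟫ := by
  obtain ⟨p, hp, hmin, -⟩ := h
  exact _root_.inner_nonneg_of_mem_asymptoticCone hK hKc hp hmin hv

theorem eq_zero_of_mem_asymptoticCone (h : HasBalancedSupport K u) (hK : Convex ℝ K)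
    (hKc : IsClosed K) (hline : ¬∃ x v : EuclideanSpace ℝ (Fin n), v ≠ 0 ∧ ∀ t : ℝ, x + t • v ∈ K)
    (hv : v ∈ asymptoticCone ℝ K) (hvu : ⟪v, u⟫ = 0) : v = 0 := by
  obtain ⟨p, hp, -, hbal⟩ := h
  by_contra hv0
  refine hline ⟨p, v, hv0, fun t => (hbal p ⟨hp, rfl⟩ v hv0 (fun s hs => ⟨?_, ?_⟩) t).1⟩
  · exact hK.add_smul_mem_of_mem_asymptoticCone hKc hv hp hs
  · rw [inner_add_left, real_inner_smul_left, hvu, mul_zero, add_zero]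

theorem add (h₀ : HasBalancedSupport K₀ u) (h₁ : HasBalancedSupport K₁ u) (hK₀ : Convex ℝ K₀)
    (hK₀c : IsClosed K₀) (hK₁ : Convex ℝ K₁) (hK₁c : IsClosed K₁)
    (hline : ¬∃ x v : EuclideanSpace ℝ (Fin n), v ≠ 0 ∧ ∀ t : ℝ, x + t • v ∈ K₁) :
    HasBalancedSupport (K₀ + K₁) u := by
  have hF₁ := isBounded_sep_inner_eq hK₁ hK₁c
    fun _ hv => h₁.eq_zero_of_mem_asymptoticCone hK₁ hK₁c hline hv
  obtain ⟨p₀, hp₀, hmin₀, hbal₀⟩ := h₀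
  obtain ⟨p₁, hp₁, hmin₁, -⟩ := h₁
  have hmin : ∀ x ∈ K₀ + K₁, ⟪p₀ + p₁, u⟫ ≤ ⟪x, u⟫ := by
    rintro _ ⟨x₀, hx₀, x₁, hx₁, rfl⟩
    simp only [inner_add_left]
    linarith [hmin₀ x₀ hx₀, hmin₁ x₁ hx₁]
  have hface : {z ∈ K₀ + K₁ | ⟪z, u⟫ = ⟪p₀ + p₁, u⟫} ⊆
      {z ∈ K₀ | ⟪z, u⟫ = ⟪p₀, u⟫} + {z ∈ K₁ | ⟪z, u⟫ = ⟪p₁, u⟫} := by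
    rintro _ ⟨⟨x₀, hx₀, x₁, hx₁, rfl⟩, hx⟩
    simp only [inner_add_left] at hx
    have := hmin₀ x₀ hx₀
    have := hmin₁ x₁ hx₁
    exact add_mem_add ⟨hx₀, by linarith⟩ ⟨hx₁, by linarith⟩
  refine ⟨p₀ + p₁, add_mem_add hp₀ hp₁, hmin, fun x hx v hv hray t => ?_⟩
  obtain ⟨x₀, hx₀, x₁, hx₁, rfl⟩ := hface hx
  have hvF₀ := mem_asymptoticCone_of_forall_add_smul_mem_add (hF₁ _) fun s hs => hface (hray s hs)
  have hline₀ := hbal₀ x₀ hx₀ v hv (fun s hs =>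
    (hK₀.sep_inner_eq u _).add_smul_mem_of_mem_asymptoticCone (hK₀c.sep_inner_eq u _) hvF₀ hx₀ hs) t
  rw [add_right_comm]
  refine ⟨add_mem_add hline₀.1 hx₁.1, ?_⟩
  rw [inner_add_left, hline₀.2, hx₁.2, inner_add_left]

end HasBalancedSupport

theorem minkowski_sum_preserves_boundary_type_general (n : ℕ)
    (u : EuclideanSpace ℝ (Fin n))
    (K₀ K₁ : Set (EuclideanSpace ℝ (Fin n)))
    (h₀cl : IsClosed K₀) (h₀conv : Convex ℝ K₀) (h₀int : (interior K₀).Nonempty)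
    (h₀bal : HasBalancedSupport K₀ u)
    (h₁cl : IsClosed K₁) (h₁conv : Convex ℝ K₁)
    (h₁unb : ¬ Bornology.IsBounded K₁)
    (h₁noline : ¬ ∃ x v : EuclideanSpace ℝ (Fin n), v ≠ 0 ∧ ∀ t : ℝ, x + t • v ∈ K₁)
    (h₁bal : HasBalancedSupport K₁ u) :
    IsClosed (K₀ + K₁) ∧ Convex ℝ (K₀ + K₁) ∧ (interior (K₀ + K₁)).Nonempty ∧
      ¬ Bornology.IsBounded (K₀ + K₁) ∧
      Nonempty ((frontier (K₀ + K₁)) ≃ₜ EuclideanSpace ℝ (Fin (n - 1))) ∧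
      HasBalancedSupport (K₀ + K₁) u := by
  have hu₁ v (hv : v ∈ asymptoticCone ℝ K₁) :=
    h₁bal.inner_nonneg_of_mem_asymptoticCone h₁conv h₁cl hv
  have hK₁u v (hv : v ∈ asymptoticCone ℝ K₁) :=
    h₁bal.eq_zero_of_mem_asymptoticCone h₁conv h₁cl h₁noline hv
  have hclosed : IsClosed (K₀ + K₁) := isClosed_add_of_asymptoticCone h₀cl h₁cl fun v hv₁ hv₀ =>
    hK₁u v hv₁ <| le_antisymm (by simpa [inner_neg_left] using
      h₀bal.inner_nonneg_of_mem_asymptoticCone h₀conv h₀cl hv₀) (hu₁ v hv₁)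
  have hconv := h₀conv.add h₁conv
  have hbal := h₀bal.add h₁bal h₀conv h₀cl h₁conv h₁cl h₁noline
  obtain ⟨w, hw0, hw⟩ := not_bounded_iff_exists_ne_zero_mem_asymptoticCone.1 h₁unb
  have hw' := asymptoticCone_subset_add_left (h₀int.mono interior_subset) hw
  have hwu : 0 < ⟪w, u⟫ := (hu₁ w hw).lt_of_ne' (mt (hK₁u w hw) hw0)
  obtain ⟨a, ha⟩ := h₀int
  obtain ⟨p₁, hp₁, -⟩ := h₁bal
  have hint : (interior (K₀ + K₁)).Nonempty :=
    ⟨a + p₁, subset_interior_add_left (add_mem_add ha hp₁)⟩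
  have hfr := hconv.nonempty_frontier_homeomorph_euclideanSpace hint
    (fun v hv => hbal.inner_nonneg_of_mem_asymptoticCone hconv hclosed hv) hw' hwu
  rw [finrank_euclideanSpace_fin] at hfr
  exact ⟨hclosed, hconv, hint, not_bounded_iff_exists_ne_zero_mem_asymptoticCone.2 ⟨w, hw0, hw'⟩,
    hfr, hbal⟩

/-- If `K₀ ⊆ ℝⁿ` is an unbounded convex body with boundary homeomorphic to `ℝⁿ⁻¹` and balanced
support with respect to the unit vector `u`, and `K₁ ⊆ ℝⁿ` is an unbounded convex body containing
no line with balanced support with respect to `u`, then `K = K₀ + K₁` is closed, is an unbounded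
convex body whose boundary is homeomorphic to `ℝⁿ⁻¹`, and has balanced support with respect
to `u`. -/
theorem minkowski_sum_preserves_boundary_type (n : ℕ) (hn : 1 ≤ n)
    (u : EuclideanSpace ℝ (Fin n)) (hu : ‖u‖ = 1)
    (K₀ K₁ : Set (EuclideanSpace ℝ (Fin n)))
    (h₀cl : IsClosed K₀) (h₀conv : Convex ℝ K₀) (h₀int : (interior K₀).Nonempty)
    (h₀unb : ¬ Bornology.IsBounded K₀)
    (h₀bd : Nonempty ((frontier K₀) ≃ₜ EuclideanSpace ℝ (Fin (n - 1))))
    (h₀bal : HasBalancedSupport K₀ u)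
    (h₁cl : IsClosed K₁) (h₁conv : Convex ℝ K₁) (h₁int : (interior K₁).Nonempty)
    (h₁unb : ¬ Bornology.IsBounded K₁)
    (h₁noline : ¬ ∃ x v : EuclideanSpace ℝ (Fin n), v ≠ 0 ∧ ∀ t : ℝ, x + t • v ∈ K₁)
    (h₁bal : HasBalancedSupport K₁ u) :
    IsClosed (K₀ + K₁) ∧ Convex ℝ (K₀ + K₁) ∧ (interior (K₀ + K₁)).Nonempty ∧
      ¬ Bornology.IsBounded (K₀ + K₁) ∧
      Nonempty ((frontier (K₀ + K₁)) ≃ₜ EuclideanSpace ℝ (Fin (n - 1))) ∧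
      HasBalancedSupport (K₀ + K₁) u :=
  minkowski_sum_preserves_boundary_type_general n u K₀ K₁ h₀cl h₀conv h₀int h₀bal h₁cl h₁conv h₁unb
    h₁noline h₁bal
end
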